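/- arXiv:1505.04806 — 6 statements merged into one kernel-verified Lean document; each statement's English description precedes it below -/
import Mathlib

section
/- Let G = (V,E) be a finite simple strongly connected directed graph. The edge set of the tree graph 𝒯G can be partitioned into edge-disjoint simple directed cycles, each of which projects bijectively under p onto a simple directed cycle of G. Moreover, for every simple directed cycle C of G with vertex set W, the number of simple cycles of 𝒯G lying above C equals the number of oriented forests of G rooted in W. -/
open Classical Finset

noncomputable section

variable {V : Type*} {R : Type*} [CommRing R]

/-- An oriented spanning tree of the digraph `E` on `V`: `root` has outdegree 0
(convention `out root = root`), every other vertex `v` has a unique outgoing edge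
`(v, out v)` which is an edge of the graph, and iterating `out` from any vertex
reaches the root (no cycles). -/
structure SpTree [Fintype V] (E : V → V → Prop) where
  root : V
  out : V → V
  out_root : out root = root
  edge_mem : ∀ v, v ≠ root → E v (out v)
  reach : ∀ v, ∃ n, out^[n] v = root

theorem SpTree.ext' [Fintype V] {E : V → V → Prop} {a b : SpTree E}
    (h1 : a.root = b.root) (h2 : a.out = b.out) : a = b := by
  cases a; cases b; dsimp at h1 h2; subst h1; subst h2; rfl

noncomputable instance [Fintype V] (E : V → V → Prop) : Fintype (SpTree E) :=
  Fintype.ofInjective (fun a => (a.root, a.out)) fun a b h =>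
    SpTree.ext' (congrArg Prod.fst h) (congrArg Prod.snd h)

/-- An oriented forest of the digraph `E`, rooted in the set `U`. -/
structure SpForest [Fintype V] (E : V → V → Prop) (U : Finset V) where
  out : V → V
  out_root : ∀ v ∈ U, out v = v
  edge_mem : ∀ v, v ∉ U → E v (out v)
  reach : ∀ v, ∃ n, out^[n] v ∈ U

theorem SpForest.ext' [Fintype V] {E : V → V → Prop} {U : Finset V} {a b : SpForest E U}
    (h : a.out = b.out) : a = b := by
  cases a; cases b; dsimp at h; subst h; rfl

noncomputable instance [Fintype V] (E : V → V → Prop) (U : Finset V) :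
    Fintype (SpForest E U) :=
  Fintype.ofInjective SpForest.out fun _ _ h => SpForest.ext' h

/-- The adjacency relation of the tree graph `𝒯G`: there is an edge from `a` to `b`
if `b` is obtained from `a` by adding the edge `(a.root, b.root)` of `G` and deleting
the edge of `a` going out of `b.root`. -/
def TStep [Fintype V] (E : V → V → Prop) (a b : SpTree E) : Prop :=
  E a.root b.root ∧ a.root ≠ b.root ∧ b.out a.root = b.root ∧
    ∀ v, v ≠ a.root → v ≠ b.root → b.out v = a.out v

/-- The set `W` is strongly connected in the digraph `E` (for the induced subgraph). -/
def SConn (E : V → V → Prop) (W : Set V) : Prop :=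
  ∀ u ∈ W, ∀ v ∈ W, Relation.ReflTransGen (fun a b => E a b ∧ a ∈ W ∧ b ∈ W) u v

/-- Edge-weighted Laplacian matrix of the digraph `E`, with weight `x (v,w)` on the
edge from `v` to `w`. -/
def lapM [Fintype V] (E : V → V → Prop) (x : V × V → R) : Matrix V V R :=
  Matrix.of fun v w =>
    if v = w then -(∑ u ∈ univ.filter (fun u => E v u), x (v, u))
    else if E v w then x (v, w) else 0

/-- Schrödinger operator `L = Q + Y` with potential `y`. -/
def schrM [Fintype V] (E : V → V → Prop) (x : V × V → R) (y : V → R) : Matrix V V R :=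
  lapM E x + Matrix.diagonal y

/-- Weighted adjacency matrix. -/
def adjM [Fintype V] (E : V → V → Prop) (x : V × V → R) : Matrix V V R :=
  Matrix.of fun v w => if E v w then x (v, w) else 0

/-- Submatrix keeping rows and columns indexed by `W`. -/
def subM [Fintype V] (M : Matrix V V R) (W : Finset V) :
    Matrix {v // v ∈ W} {v // v ∈ W} R :=
  M.submatrix Subtype.val Subtype.val

/-- The lifted edge weights on the tree graph: the edge from `a` to `b` in `𝒯G`
carries the weight of the edge of `G` from `a.root` to `b.root`. -/
def xT [Fintype V] (E : V → V → Prop) (x : V × V → R) : SpTree E × SpTree E → R :=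
  fun p => x (p.1.root, p.2.root)

/-- The lifted potential on the tree graph. -/
def yT [Fintype V] (E : V → V → Prop) (y : V → R) : SpTree E → R :=
  fun a => y a.root

/-- Weight `π_𝐚` of a spanning tree: product of its edge weights. -/
def treeWt [Fintype V] {E : V → V → Prop} (x : V × V → R) (a : SpTree E) : R :=
  ∏ v ∈ univ.filter (fun v => v ≠ a.root), x (v, a.out v)

/-- Generating polynomial of the oriented spanning trees of `E`. -/
def FGpoly [Fintype V] (E : V → V → Prop) (x : V × V → R) : R :=
  ∑ a : SpTree E, treeWt x a

/-- Weight `π_𝐟` of a forest: product of its edge weights. -/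
def forestWt [Fintype V] {E : V → V → Prop} {U : Finset V} (x : V × V → R)
    (f : SpForest E U) : R :=
  ∏ v ∈ univ.filter (fun v => v ∉ U), x (v, f.out v)

/-- Generating polynomial `Ψ_U` of the oriented forests of `E` rooted in `U`. -/
def PsiF [Fintype V] (E : V → V → Prop) (U : Finset V) (x : V × V → R) : R :=
  ∑ f : SpForest E U, forestWt x f

/-- Generating polynomial of the oriented spanning trees of the tree graph `𝒯G`. -/
def FTGpoly [Fintype V] (E : V → V → Prop) (x : V × V → R) : R :=
  FGpoly (TStep E) (xT E x)

/-- The polynomial ring `ℂ[x_e (e ∈ V × V), y_v (v ∈ V)]`. -/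
abbrev Rng (V : Type*) := MvPolynomial ((V × V) ⊕ V) ℂ

/-- The edge variable `x_e`. -/
def xv {V : Type*} : V × V → Rng V := fun e => MvPolynomial.X (Sum.inl e)

/-- The vertex variable `y_v`. -/
def yv {V : Type*} : V → Rng V := fun v => MvPolynomial.X (Sum.inr v)

/-! ### The exploration algorithm -/

/-- The state of the exploration algorithm: a set `A` of explored vertices, a FIFO
list `Lq` of edges to be examined, a reservoir `F` of edges, and the set `Er` of
erased vertices. -/
structure ExpState (V : Type*) where
  A : Finset V
  Lq : List (V × V)
  F : Finset (V × V)
  Er : Finset V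

/-- The list of the edges of `S` with target `w`, ordered by increasing source. -/
def sortedTo (ord : LinearOrder V) (S : Finset (V × V)) (w : V) : List (V × V) :=
  letI := ord
  (((S.filter (fun f => f.2 = w)).image Prod.fst).sort (· ≤ ·)).map fun u => (u, w)

/-- The edge `e` belongs to the tree `a`. -/
def inTree [Fintype V] {E : V → V → Prop} (a : SpTree E) (e : V × V) : Prop :=
  e.1 ≠ a.root ∧ a.out e.1 = e.2

/-- One iteration of the exploration algorithm: pick the first edge `e` of the list,
with source `w`; if `e` belongs to the tree then add `w` to `A`, delete all edges with
source `w` from the list, and append the edges of `F` with target `w` by increasing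
source; otherwise erase `w`, deleting all edges with source or target `w` from the
list and from `F`. -/
def expStep [Fintype V] {E : V → V → Prop} (ord : LinearOrder V) (a : SpTree E)
    (s : ExpState V) : ExpState V :=
  match s.Lq with
  | [] => s
  | e :: rest =>
    if inTree a e then
      { A := insert e.1 s.A
        Lq := rest.filter (fun f => decide (f.1 ≠ e.1)) ++ sortedTo ord s.F e.1
        F := s.F
        Er := s.Er }
    else
      { A := s.A
        Lq := rest.filter (fun f => decide (f.1 ≠ e.1 ∧ f.2 ≠ e.1))
        F := s.F.filter (fun f => f.1 ≠ e.1 ∧ f.2 ≠ e.1)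
        Er := insert e.1 s.Er }

/-- The initial state of the exploration algorithm run on a tree rooted at `v`:
`A = {v}`, the list consists of the edges with target `v` by increasing source, and
`F` is the set of edges with source `≠ v`. -/
def expInit [Fintype V] {E : V → V → Prop} (ord : LinearOrder V) (a : SpTree E) :
    ExpState V :=
  letI := ord
  { A := {a.root}
    Lq := ((univ.filter (fun u => E u a.root)).sort (· ≤ ·)).map fun u => (u, a.root)
    F := univ.filter fun f : V × V => E f.1 f.2 ∧ f.1 ≠ a.root
    Er := (∅ : Finset V) }

/-- The final state of the exploration algorithm (the number of iterations below is
large enough for the list to be exhausted, after which the state no longer moves). -/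
def expRun [Fintype V] {E : V → V → Prop} (ord : LinearOrder V) (a : SpTree E) :
    ExpState V :=
  (expStep ord a)^[2 * Fintype.card (V × V) + 1] (expInit ord a)

/-- The set `φ(𝐚)` of explored vertices. -/
def expPhi [Fintype V] {E : V → V → Prop} (ord : LinearOrder V) (a : SpTree E) : Finset V :=
  (expRun ord a).A

/-- The set of erased vertices. -/
def expEr [Fintype V] {E : V → V → Prop} (ord : LinearOrder V) (a : SpTree E) : Finset V :=
  (expRun ord a).Er

/-- The set `ψ(𝐚)`: the strongly connected component of the root in the subgraph
induced on `φ(𝐚)`. -/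
def expPsi [Fintype V] {E : V → V → Prop} (ord : LinearOrder V) (a : SpTree E) : Finset V :=
  univ.filter fun u => u ∈ expPhi ord a ∧
    Relation.ReflTransGen
      (fun p q => E p q ∧ p ∈ expPhi ord a ∧ q ∈ expPhi ord a) a.root u ∧
    Relation.ReflTransGen
      (fun p q => E p q ∧ p ∈ expPhi ord a ∧ q ∈ expPhi ord a) u a.root

/-- The multiplicity `m(W, w)`: the number of oriented spanning trees `𝐚` rooted at
`w` with `ψ(𝐚) = W`. -/
def multCount [Fintype V] (E : V → V → Prop) (ord : LinearOrder V) (W : Finset V)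
    (w : V) : ℕ :=
  Nat.card {a : SpTree E // a.root = w ∧ expPsi ord a = W}

/-- The multiplicity `m(W)` (the common value of the `m(W, w)`, `w ∈ W`). -/
def multW [Fintype V] (E : V → V → Prop) (ord : LinearOrder V) (W : Finset V) : ℕ :=
  letI := ord
  if h : W.Nonempty then multCount E ord W (W.min' h) else 0

end
/-- A simple directed cycle in the digraph `E'`, encoded as the (nonempty, duplicate
free) list of its vertices in cyclic order: every vertex is followed by the next one
along an edge, cyclically. -/
def IsSimpleCycle {V' : Type*} (E' : V' → V' → Prop) (c : List V') : Prop :=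
  c ≠ [] ∧ c.Nodup ∧ ∀ p ∈ c.zip (c.rotate 1), E' p.1 p.2

/-! An edge `a → b` of `𝒯G` closes, together with the path of `a` from `b.root` to its root,
a simple cycle `C` of `G`. Cutting `a` along `C` leaves a forest `f` rooted in the vertices of
`C`, and the trees obtained from `f` by adding all edges of `C` but one form a simple cycle of
`𝒯G` through `a → b` lying over `C`. Conversely, consecutive trees along a simple cycle of
`𝒯G` projecting bijectively onto `C` differ only at their two roots; hence all its trees agree
off `C`, and each sends every vertex of `C` other than its root to the next one. So the cycle
is the lift of `C` with the forest that its trees induce: the lifts over `C` correspond to the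
pairs (rotation of `C`, forest rooted in `C`), and keeping one rotation of each lift
partitions the edges of `𝒯G`. -/

noncomputable section

namespace List

variable {α : Type*} {l l' : List α}

theorem mem_zip_rotate_one_iff {p : α × α} :
    p ∈ l.zip (l.rotate 1) ↔
      ∃ (j : ℕ) (hj : j < l.length),
        p = (l[j], l[(j + 1) % l.length]'(Nat.mod_lt _ (by omega))) := by
  simp only [mem_iff_getElem, length_zip, length_rotate, Nat.min_self,
    getElem_zip, getElem_rotate]
  exact ⟨fun ⟨j, hj, h⟩ => ⟨j, hj, h.symm⟩, fun ⟨j, hj, h⟩ => ⟨j, hj, h.symm⟩⟩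

theorem mem_zip_rotate_one_of_isRotated {p : α × α} (h : l ~r l')
    (hp : p ∈ l.zip (l.rotate 1)) : p ∈ l'.zip (l'.rotate 1) := by
  obtain ⟨n, rfl⟩ := h
  rw [rotate_rotate, Nat.add_comm, ← rotate_rotate, zip,
    ← zipWith_rotate_distrib _ _ _ _ (length_rotate _ _).symm]
  exact mem_rotate.2 hp

theorem exists_rotate_eq_of_mem_zip_rotate_one {p : α × α} (hp : p ∈ l.zip (l.rotate 1)) :
    ∃ (m : ℕ) (hpos : 0 < l.length),
      (l.rotate m)[l.length - 1]'(by simpa using hpos) = p.1 ∧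
        (l.rotate m)[0]'(by simpa using hpos) = p.2 := by
  obtain ⟨i, hi, rfl⟩ := mem_zip_rotate_one_iff.1 hp
  refine ⟨i + 1, by omega, ?_, ?_⟩ <;> simp only [getElem_rotate]
  · simp only [show l.length - 1 + (i + 1) = i + l.length by omega, Nat.add_mod_right,
      Nat.mod_eq_of_lt hi]
  · simp only [Nat.zero_add]

theorem iterate_getElem_of_chain {g : α → α}
    (hstep : ∀ k (hk : k + 1 < l.length), g l[k] = l[k + 1]) {k i : ℕ}
    (h : k + i < l.length) : g^[i] l[k] = l[k + i] := by
  induction i with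
  | zero => rfl
  | succ i ih =>
    rw [Function.iterate_succ_apply', ih (by omega), hstep _ (by omega)]
    simp only [Nat.add_assoc]

theorem exists_isRotated_append_singleton {x : α} (hx : x ∈ l) : ∃ s, l ~r s ++ [x] := by
  obtain ⟨s, t, rfl⟩ := append_of_mem hx
  exact ⟨t ++ s, isRotated_append.trans (by simpa using (isRotated_concat x (t ++ s)).symm)⟩

end List

theorem Function.exists_iterate_mem_of_eqOn_compl {α : Type*} {g h : α → α} {s : Set α}
    (hgh : ∀ v ∉ s, h v = g v) {n : ℕ} {v : α} (hn : g^[n] v ∈ s) :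
    ∃ m, h^[m] v ∈ s := by
  induction n generalizing v with
  | zero => exact ⟨0, hn⟩
  | succ n ih =>
    by_cases hv : v ∈ s
    · exact ⟨0, hv⟩
    · obtain ⟨m, hm⟩ := ih (v := g v) hn
      exact ⟨m + 1, by rwa [Function.iterate_succ_apply, hgh v hv]⟩

namespace IsSimpleCycle

variable {α : Type*} {r : α → α → Prop} {l l' : List α}

theorem rel_getElem (hc : IsSimpleCycle r l) {j : ℕ} (hj : j < l.length) :
    r l[j] (l[(j + 1) % l.length]'(Nat.mod_lt _ (by omega))) :=
  hc.2.2 _ (List.mem_zip_rotate_one_iff.2 ⟨j, hj, rfl⟩)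

theorem rel_getElem_succ (hc : IsSimpleCycle r l) {k : ℕ} (hk : k + 1 < l.length) :
    r l[k] l[k + 1] := by
  simpa [Nat.mod_eq_of_lt hk] using hc.rel_getElem (j := k) (by omega)

theorem of_isRotated (hc : IsSimpleCycle r l) (h : l ~r l') : IsSimpleCycle r l' :=
  ⟨fun h' => hc.1 (List.isRotated_nil_iff.1 (h' ▸ h)), h.nodup_iff.1 hc.2.1,
    fun _ hp => hc.2.2 _ (List.mem_zip_rotate_one_of_isRotated h.symm hp)⟩

theorem rotate (hc : IsSimpleCycle r l) (n : ℕ) : IsSimpleCycle r (l.rotate n) :=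
  hc.of_isRotated ⟨n, rfl⟩

end IsSimpleCycle

namespace SpTree

variable {V : Type*} [Fintype V] {E : V → V → Prop} (a : SpTree E)

def depth (v : V) : ℕ := Nat.find (a.reach v)

theorem iterate_depth (v : V) : a.out^[a.depth v] v = a.root :=
  Nat.find_spec (a.reach v)

theorem depth_le {v : V} {n : ℕ} (h : a.out^[n] v = a.root) : a.depth v ≤ n :=
  Nat.find_min' _ h

theorem iterate_ne_root {v : V} {n : ℕ} (h : n < a.depth v) : a.out^[n] v ≠ a.root :=
  Nat.find_min _ h

theorem iterate_injOn_depth {v : V} {i j : ℕ} (hi : i ≤ a.depth v) (hj : j ≤ a.depth v)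
    (h : a.out^[i] v = a.out^[j] v) : i = j := by
  wlog hij : i ≤ j generalizing i j
  · exact (this hj hi h.symm (by omega)).symm
  by_contra hne
  have hroot : a.out^[a.depth v - j + i] v = a.root := by
    rw [Function.iterate_add_apply, h, ← Function.iterate_add_apply, Nat.sub_add_cancel hj,
      iterate_depth]
  exact a.iterate_ne_root (by omega) hroot

def rootPath (v : V) : List V := List.iterate a.out v (a.depth v + 1)

@[simp] theorem length_rootPath (v : V) : (a.rootPath v).length = a.depth v + 1 :=
  List.length_iterate _ _ _

@[simp] theorem getElem_rootPath (v : V) {k : ℕ} (hk : k < (a.rootPath v).length) :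
    (a.rootPath v)[k] = a.out^[k] v :=
  List.getElem_iterate _ _ _ _ _

theorem root_mem_rootPath (v : V) : a.root ∈ a.rootPath v :=
  List.mem_iff_getElem.2 ⟨a.depth v, by simp, by simp [iterate_depth]⟩

theorem nodup_rootPath (v : V) : (a.rootPath v).Nodup :=
  List.nodup_iff_injective_getElem.2 fun i j h => Fin.ext <|
    a.iterate_injOn_depth (by have := i.2; simp at this; omega)
      (by have := j.2; simp at this; omega) (by simpa using h)

theorem isSimpleCycle_rootPath {v : V} (h : E a.root v) : IsSimpleCycle E (a.rootPath v) := by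
  refine ⟨List.ne_nil_of_length_pos (by simp), a.nodup_rootPath v, fun p hp => ?_⟩
  obtain ⟨j, hj, rfl⟩ := List.mem_zip_rotate_one_iff.1 hp
  simp only [length_rootPath] at hj
  simp only [getElem_rootPath, length_rootPath]
  rcases Nat.lt_or_ge j (a.depth v) with hlt | hge
  · rw [Nat.mod_eq_of_lt (by omega), Function.iterate_succ_apply']
    exact a.edge_mem _ (a.iterate_ne_root hlt)
  · rw [show j = a.depth v by omega, Nat.mod_self, iterate_depth]
    exact h

theorem rootPath_eq_of_chain {v : V} {l : List V} (hl : l.Nodup) (hpos : 0 < l.length)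
    (hhead : l[0] = v) (hstep : ∀ k (hk : k + 1 < l.length), l[k + 1] = a.out l[k])
    (hlast : l[l.length - 1] = a.root) : a.rootPath v = l := by
  have hiter : ∀ k (hk : k < l.length), l[k] = a.out^[k] v := fun k hk => by
    simpa [hhead] using
      (List.iterate_getElem_of_chain (fun k hk => (hstep k hk).symm) (k := 0) (by omega)).symm
  have hdepth : a.depth v = l.length - 1 := by
    refine le_antisymm (a.depth_le ((hiter _ (by omega)).symm.trans hlast)) ?_
    by_contra! hlt
    have := hl.getElem_inj_iff.1 (((hiter _ (by omega)).trans (a.iterate_depth v)).trans hlast.symm)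
    omega
  exact List.ext_getElem (by simp; omega) fun k _ hk => by simp [hiter k hk]

def cut (U : Finset V) (h : a.root ∈ U) : SpForest E U where
  out v := if v ∈ U then v else a.out v
  out_root _ hv := if_pos hv
  edge_mem v hv := by
    simp only [if_neg hv]
    exact a.edge_mem v fun h' => hv (h' ▸ h)
  reach v := by
    obtain ⟨n, hn⟩ := a.reach v
    exact Function.exists_iterate_mem_of_eqOn_compl (s := (U : Set V))
      (fun w hw => if_neg hw) (g := a.out) (hn ▸ h)

theorem cut_out_of_not_mem {U : Finset V} (h : a.root ∈ U) {v : V}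
    (hv : v ∉ U) : (a.cut U h).out v = a.out v :=
  if_neg hv

end SpTree

section CycleTree

variable {V : Type*} {E : V → V → Prop} {cy : List V}

def cycleOut (cy : List V) (fo : V → V) (r : V) (v : V) : V :=
  if v = r then v else if h : v ∈ cy then cy.next v h else fo v

theorem exists_iterate_cycleOut_eq (hnd : cy.Nodup) (fo : V → V) {r w : V} (hr : r ∈ cy)
    (hw : w ∈ cy) : ∃ k, (cycleOut cy fo r)^[k] w = r := by
  -- along a rotation `s ++ [r]` of `cy`, `cycleOut` moves each vertex to the next one
  obtain ⟨s, hs⟩ := List.exists_isRotated_append_singleton hr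
  have hnd' : (s ++ [r]).Nodup := hs.nodup_iff.1 hnd
  have hlast : (s ++ [r])[s.length]'(by simp) = r := by simp
  have hstep : ∀ k (hk : k + 1 < (s ++ [r]).length),
      cycleOut cy fo r (s ++ [r])[k] = (s ++ [r])[k + 1] := by
    intro k hk
    have hne : (s ++ [r])[k] ≠ r := fun h => by
      have := hnd'.getElem_inj_iff.1 (h.trans hlast.symm)
      simp at hk
      omega
    rw [cycleOut, if_neg hne, dif_pos (hs.mem_iff.2 (List.getElem_mem _)),
      List.isRotated_next_eq hs hnd, List.next_getElem _ hnd']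
    simp only [Nat.mod_eq_of_lt hk]
  obtain ⟨k, hk, rfl⟩ := List.getElem_of_mem (hs.mem_iff.1 hw)
  simp only [List.length_append, List.length_singleton] at hk
  exact ⟨s.length - k, by
    rw [List.iterate_getElem_of_chain hstep (by simp; omega)]
    simp only [show k + (s.length - k) = s.length by omega, hlast]⟩

variable [Fintype V]

def cycleTree (hc : IsSimpleCycle E cy) (f : SpForest E cy.toFinset) (r : V) (hr : r ∈ cy) :
    SpTree E where
  root := r
  out := cycleOut cy f.out r
  out_root := if_pos rfl
  edge_mem v hv := by
    rw [cycleOut, if_neg hv]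
    split_ifs with hvc
    · obtain ⟨j, hj, rfl⟩ := List.getElem_of_mem hvc
      rw [List.next_getElem _ hc.2.1]
      exact hc.rel_getElem hj
    · exact f.edge_mem v (by simpa using hvc)
  reach v := by
    obtain ⟨n, hn⟩ := f.reach v
    have hagree : ∀ w ∉ (cy.toFinset : Set V), cycleOut cy f.out r w = f.out w := fun w hw => by
      have hw : w ∉ cy := by simpa using hw
      rw [cycleOut, if_neg (by rintro rfl; exact hw hr), dif_neg hw]
    obtain ⟨m, hm⟩ := Function.exists_iterate_mem_of_eqOn_compl hagree (g := f.out) hn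
    obtain ⟨k, hk⟩ := exists_iterate_cycleOut_eq hc.2.1 f.out hr (by simpa using hm)
    exact ⟨k + m, by rw [Function.iterate_add_apply, hk]⟩

@[simp] theorem cycleTree_root (hc : IsSimpleCycle E cy) (f : SpForest E cy.toFinset) {r : V}
    (hr : r ∈ cy) : (cycleTree hc f r hr).root = r := rfl

theorem cycleTree_out (hc : IsSimpleCycle E cy) (f : SpForest E cy.toFinset) {r : V}
    (hr : r ∈ cy) : (cycleTree hc f r hr).out = cycleOut cy f.out r := rfl

theorem cycleTree_out_of_not_mem (hc : IsSimpleCycle E cy) (f : SpForest E cy.toFinset)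
    {r v : V} (hr : r ∈ cy) (hv : v ∉ cy) : (cycleTree hc f r hr).out v = f.out v := by
  rw [cycleTree_out, cycleOut, if_neg (by rintro rfl; exact hv hr), dif_neg hv]

theorem tStep_cycleTree (hs : ∀ v, ¬ E v v) (hc : IsSimpleCycle E cy)
    (f : SpForest E cy.toFinset) {j : ℕ} (hj : j < cy.length) :
    TStep E (cycleTree hc f cy[j] (List.getElem_mem hj))
      (cycleTree hc f (cy[(j + 1) % cy.length]'(Nat.mod_lt _ (by omega)))
        (List.getElem_mem _)) := by
  have hE := hc.rel_getElem hj
  have hne : cy[j] ≠ cy[(j + 1) % cy.length]'(Nat.mod_lt _ (by omega)) := by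
    rintro h
    exact hs _ (h ▸ hE)
  refine ⟨hE, hne, ?_, fun v hv1 hv2 => ?_⟩ <;> simp only [cycleTree_root] at *
  · rw [cycleTree_out, cycleOut, if_neg hne, dif_pos (List.getElem_mem hj),
      List.next_getElem _ hc.2.1]
  · simp only [cycleTree_out, cycleOut, if_neg hv1, if_neg hv2]

def liftCycle (hc : IsSimpleCycle E cy) (f : SpForest E cy.toFinset) : List (SpTree E) :=
  cy.pmap (cycleTree hc f) fun _ h => h

@[simp] theorem length_liftCycle (hc : IsSimpleCycle E cy) (f : SpForest E cy.toFinset) :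
    (liftCycle hc f).length = cy.length :=
  List.length_pmap

@[simp] theorem getElem_liftCycle (hc : IsSimpleCycle E cy) (f : SpForest E cy.toFinset)
    {j : ℕ} (hj : j < (liftCycle hc f).length) :
    (liftCycle hc f)[j] = cycleTree hc f (cy[j]'(by simpa using hj)) (List.getElem_mem _) :=
  List.getElem_pmap _ _ _

@[simp] theorem map_root_liftCycle (hc : IsSimpleCycle E cy) (f : SpForest E cy.toFinset) :
    (liftCycle hc f).map SpTree.root = cy :=
  List.ext_getElem (by simp) fun _ _ _ => by simp [cycleTree]

theorem isSimpleCycle_liftCycle (hs : ∀ v, ¬ E v v) (hc : IsSimpleCycle E cy)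
    (f : SpForest E cy.toFinset) : IsSimpleCycle (TStep E) (liftCycle hc f) := by
  refine ⟨fun h => hc.1 (by simpa using congrArg (List.map SpTree.root) h),
    List.Nodup.of_map SpTree.root (by simpa using hc.2.1), fun p hp => ?_⟩
  obtain ⟨j, hj, rfl⟩ := List.mem_zip_rotate_one_iff.1 hp
  simp only [length_liftCycle] at hj
  simpa using tStep_cycleTree hs hc f hj

theorem liftCycle_injective (hc : IsSimpleCycle E cy) : Function.Injective (liftCycle hc) := by
  intro f f' h
  have hpos : 0 < cy.length := List.length_pos_iff.2 hc.1
  have h0 := congrArg SpTree.out (List.getElem_of_eq h (by simpa using hpos))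
  simp only [getElem_liftCycle] at h0
  refine SpForest.ext' (funext fun v => ?_)
  by_cases hv : v ∈ cy
  · rw [f.out_root v (by simpa using hv), f'.out_root v (by simpa using hv)]
  · simpa [cycleTree_out_of_not_mem _ _ _ hv] using congrFun h0 v

end CycleTree

section TreeGraphCycles

variable {V : Type*} [Fintype V] {E : V → V → Prop} {d : List (SpTree E)}

theorem root_getElem_inj (hnd : (d.map SpTree.root).Nodup) {i j : ℕ} (hi : i < d.length)
    (hj : j < d.length) : d[i].root = d[j].root ↔ i = j := by
  rw [← hnd.getElem_inj_iff (hi := by simpa) (hj := by simpa), List.getElem_map,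
    List.getElem_map]

theorem out_eq_of_not_mem_map_root (hd : IsSimpleCycle (TStep E) d) {t t' : SpTree E}
    (ht : t ∈ d) (ht' : t' ∈ d) {v : V} (hv : v ∉ d.map SpTree.root) :
    t.out v = t'.out v := by
  have hnot : ∀ i (hi : i < d.length), v ≠ d[i].root := fun i hi h =>
    hv (h ▸ List.mem_map_of_mem (List.getElem_mem hi))
  have hconst : ∀ k (hk : k < d.length), d[k].out v = (d[0]'(by omega)).out v := by
    intro k hk
    induction k with
    | zero => rfl
    | succ k ih =>
      rw [(hd.rel_getElem_succ hk).2.2.2 v (hnot _ _) (hnot _ _), ih (by omega)]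
  obtain ⟨i, hi, rfl⟩ := List.getElem_of_mem ht
  obtain ⟨j, hj, rfl⟩ := List.getElem_of_mem ht'
  rw [hconst i hi, hconst j hj]

theorem out_root_getElem_zero (hd : IsSimpleCycle (TStep E) d)
    (hnd : (d.map SpTree.root).Nodup) {k : ℕ} (hk1 : 1 ≤ k) (hk : k < d.length) :
    d[k].out (d[0]'(by omega)).root = (d[1]'(by omega)).root := by
  have hpos : 0 < d.length := by omega
  have hroot : ∀ i (hi : i < d.length), i ≠ 0 → (d[0]'hpos).root ≠ d[i].root :=
    fun i hi hi0 h => hi0 ((root_getElem_inj hnd _ hi).1 h).symm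
  induction k, hk1 using Nat.le_induction with
  | base => exact (hd.rel_getElem_succ hk).2.2.1
  | succ k hk1 ih =>
    rw [(hd.rel_getElem_succ hk).2.2.2 _ (hroot k _ (by omega)) (hroot _ hk (by omega)),
      ih (by omega)]

theorem out_eq_next_of_mem_map_root (hd : IsSimpleCycle (TStep E) d)
    (hnd : (d.map SpTree.root).Nodup) {t : SpTree E} (ht : t ∈ d) {v : V}
    (hv : v ∈ d.map SpTree.root) (hvt : v ≠ t.root) :
    t.out v = (d.map SpTree.root).next v hv := by
  obtain ⟨j, hj, rfl⟩ := List.getElem_of_mem hv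
  rw [List.next_getElem _ hnd]
  simp only [List.length_map, List.getElem_map] at hj hvt ⊢
  -- rotating `d` by `j` reduces to the case `j = 0`
  have hd' := hd.rotate j
  have hnd' : ((d.rotate j).map SpTree.root).Nodup := by
    rw [List.map_rotate]; exact List.nodup_rotate.2 hnd
  obtain ⟨k, hk, rfl⟩ := List.getElem_of_mem (List.mem_rotate.2 ht : t ∈ d.rotate j)
  simp only [List.length_rotate] at hk
  have hk1 : 1 ≤ k := by
    by_contra! hk0
    simp [List.getElem_rotate, show k = 0 by omega, Nat.mod_eq_of_lt hj] at hvt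
  have h := out_root_getElem_zero hd' hnd' hk1 (by simpa using hk)
  simp only [List.getElem_rotate, Nat.zero_add, Nat.mod_eq_of_lt hj, Nat.add_comm 1 j] at h ⊢
  exact h

variable {cy : List V}

theorem eq_cycleTree_of_mem (hc : IsSimpleCycle E cy) (hd : IsSimpleCycle (TStep E) d)
    (hrot : d.map SpTree.root ~r cy) {f : SpForest E cy.toFinset} {t : SpTree E} (ht : t ∈ d)
    (hf : ∀ v ∉ cy, f.out v = t.out v) {s : SpTree E} (hs : s ∈ d) :
    s = cycleTree hc f s.root (hrot.mem_iff.1 (List.mem_map_of_mem hs)) := by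
  have hnd : (d.map SpTree.root).Nodup := hrot.nodup_iff.2 hc.2.1
  refine SpTree.ext' rfl (funext fun v => ?_)
  rw [cycleTree_out, cycleOut]
  split_ifs with hvs hvc
  · rw [hvs, s.out_root]
  · rw [out_eq_next_of_mem_map_root hd hnd hs (hrot.mem_iff.2 hvc) hvs,
      List.isRotated_next_eq hrot hnd]
  · rw [hf v hvc, out_eq_of_not_mem_map_root hd hs ht (fun hv => hvc (hrot.mem_iff.1 hv))]

theorem eq_rotate_liftCycle (hc : IsSimpleCycle E cy) (hd : IsSimpleCycle (TStep E) d) {m : ℕ}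
    (hm : d.map SpTree.root = cy.rotate m) {f : SpForest E cy.toFinset} {t : SpTree E}
    (ht : t ∈ d) (hf : ∀ v ∉ cy, f.out v = t.out v) : d = (liftCycle hc f).rotate m := by
  have hrot : d.map SpTree.root ~r cy := hm ▸ List.IsRotated.forall cy m
  have hlen : d.length = cy.length := by simpa using congrArg List.length hm
  refine List.ext_getElem (by simp [hlen]) fun j h1 h2 => ?_
  rw [eq_cycleTree_of_mem hc hd hrot ht hf (List.getElem_mem h1)]
  have hroot := List.getElem_of_eq hm (by simpa using h1)
  simp only [List.getElem_map, List.getElem_rotate] at hroot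
  simp only [List.getElem_rotate, getElem_liftCycle, hroot, length_liftCycle]

theorem rotate_liftCycle_injective (hc : IsSimpleCycle E cy) :
    Function.Injective fun p : Fin cy.length × SpForest E cy.toFinset =>
      (liftCycle hc p.2).rotate p.1 := by
  rintro ⟨i, f⟩ ⟨i', f'⟩ h
  dsimp only at h
  have hi : i = i' := by
    have := hc.2.1.rotate_congr hc.1 i i' (by simpa using congrArg (List.map SpTree.root) h)
    exact Fin.ext (by simpa [Nat.mod_eq_of_lt] using this)
  subst hi
  exact Prod.ext rfl (liftCycle_injective hc (List.rotate_injective _ h))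

theorem exists_rotate_liftCycle_eq (hc : IsSimpleCycle E cy) (hd : IsSimpleCycle (TStep E) d)
    {m : ℕ} (hm : d.map SpTree.root = cy.rotate m) :
    ∃ (i : Fin cy.length) (f : SpForest E cy.toFinset), (liftCycle hc f).rotate i = d := by
  have h0 : 0 < d.length := List.length_pos_iff.2 hd.1
  have hroot : (d[0]'h0).root ∈ cy.toFinset := List.mem_toFinset.2 <|
    List.mem_rotate.1 (hm ▸ List.mem_map_of_mem (List.getElem_mem h0))
  refine ⟨⟨m % cy.length, Nat.mod_lt _ (List.length_pos_iff.2 hc.1)⟩,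
    (d[0]'h0).cut _ hroot, ?_⟩
  calc (liftCycle hc ((d[0]'h0).cut _ hroot)).rotate (m % cy.length)
      = (liftCycle hc ((d[0]'h0).cut _ hroot)).rotate m := by
        rw [← length_liftCycle hc ((d[0]'h0).cut _ hroot), List.rotate_mod]
    _ = d := (eq_rotate_liftCycle hc hd hm (List.getElem_mem h0)
        fun v hv => (d[0]'h0).cut_out_of_not_mem hroot (by simpa using hv)).symm

end TreeGraphCycles

section EdgeCycle

variable {V : Type*} [Fintype V] {E : V → V → Prop} {a b : SpTree E}

theorem TStep.eq_of_root_eq {b' : SpTree E} (h : TStep E a b) (h' : TStep E a b')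
    (hroot : b.root = b'.root) : b = b' := by
  refine SpTree.ext' hroot (funext fun v => ?_)
  by_cases hvb : v = b.root
  · rw [hvb, b.out_root, hroot, b'.out_root]
  by_cases hva : v = a.root
  · rw [hva, h.2.2.1, h'.2.2.1, hroot]
  · rw [h.2.2.2 v hva hvb, h'.2.2.2 v hva (hroot ▸ hvb)]

theorem SpTree.eq_cycleTree_rootPath {v : V} (hv : E a.root v) :
    a = cycleTree (a.isSimpleCycle_rootPath hv)
      (a.cut _ (List.mem_toFinset.2 (a.root_mem_rootPath v))) a.root (a.root_mem_rootPath v) := by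
  refine SpTree.ext' rfl (funext fun w => ?_)
  rw [cycleTree_out, cycleOut]
  split_ifs with hw hwC
  · rw [hw, a.out_root]
  · obtain ⟨k, hk, rfl⟩ := List.getElem_of_mem hwC
    have hkd : k < a.depth v := by
      simp only [length_rootPath] at hk
      refine lt_of_le_of_ne (by omega) fun hkd => hw ?_
      simp [hkd, SpTree.iterate_depth]
    rw [List.next_getElem _ (a.nodup_rootPath v)]
    simp [Nat.mod_eq_of_lt (show k + 1 < a.depth v + 1 by omega), Function.iterate_succ_apply']
  · rw [SpTree.cut_out_of_not_mem _ _ (by simpa using hwC)]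

def TStep.liftedCycle (hab : TStep E a b) : List (SpTree E) :=
  liftCycle (a.isSimpleCycle_rootPath hab.1)
    (a.cut _ (List.mem_toFinset.2 (a.root_mem_rootPath b.root)))

theorem TStep.map_root_liftedCycle (hab : TStep E a b) :
    hab.liftedCycle.map SpTree.root = a.rootPath b.root :=
  map_root_liftCycle _ _

theorem TStep.isSimpleCycle_liftedCycle (hs : ∀ v, ¬ E v v) (hab : TStep E a b) :
    IsSimpleCycle (TStep E) hab.liftedCycle :=
  isSimpleCycle_liftCycle hs _ _

theorem TStep.mem_zip_liftedCycle (hs : ∀ v, ¬ E v v) (hab : TStep E a b) :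
    (a, b) ∈ hab.liftedCycle.zip (hab.liftedCycle.rotate 1) := by
  have hlen : hab.liftedCycle.length = a.depth b.root + 1 := by simp [TStep.liftedCycle]
  have hlast : hab.liftedCycle[a.depth b.root]'(by omega) = a := by
    conv_rhs => rw [a.eq_cycleTree_rootPath hab.1]
    simp [TStep.liftedCycle, SpTree.iterate_depth]
  have hstep := (hab.isSimpleCycle_liftedCycle hs).rel_getElem (j := a.depth b.root) (by omega)
  simp only [hlen, Nat.mod_self, hlast] at hstep
  have hfirst : b = hab.liftedCycle[0]'(by omega) :=
    hab.eq_of_root_eq hstep (by simp [TStep.liftedCycle])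
  refine List.mem_zip_rotate_one_iff.2 ⟨a.depth b.root, by omega, ?_⟩
  simp only [hlen, Nat.mod_self, hlast, ← hfirst]

variable {d : List (SpTree E)}

theorem rootPath_isRotated_map_root (hd : IsSimpleCycle (TStep E) d)
    (hnd : (d.map SpTree.root).Nodup) (hmem : (a, b) ∈ d.zip (d.rotate 1)) :
    a.rootPath b.root ~r d.map SpTree.root := by
  obtain ⟨m, hpos, ha, hb⟩ := List.exists_rotate_eq_of_mem_zip_rotate_one hmem
  dsimp only at ha hb
  have hnd' : ((d.rotate m).map SpTree.root).Nodup := by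
    rw [List.map_rotate]; exact List.nodup_rotate.2 hnd
  suffices h : a.rootPath b.root = (d.rotate m).map SpTree.root by
    rw [h, List.map_rotate]; exact List.IsRotated.forall _ m
  refine a.rootPath_eq_of_chain hnd' (by simpa) (by rw [List.getElem_map, hb]) (fun k hk => ?_)
    (by simp only [List.getElem_map, List.length_map, List.length_rotate, ha])
  simp only [List.length_map, List.length_rotate] at hk
  have hne : ((d.rotate m)[k]'(by simp; omega)).root ≠ a.root := by
    rw [← ha, Ne, root_getElem_inj hnd']
    omega
  have hnext := List.next_getElem _ hnd' k (by simp; omega)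
  simp only [List.length_map, List.length_rotate, Nat.mod_eq_of_lt hk, List.getElem_map] at hnext
  simp only [List.getElem_map]
  rw [out_eq_next_of_mem_map_root (hd.rotate m) hnd' (by rw [← ha]; exact List.getElem_mem _)
    (List.mem_map_of_mem (List.getElem_mem _)) hne, hnext]

theorem TStep.liftedCycle_isRotated (hab : TStep E a b) (hd : IsSimpleCycle (TStep E) d)
    (hdP : IsSimpleCycle E (d.map SpTree.root)) (hmem : (a, b) ∈ d.zip (d.rotate 1)) :
    hab.liftedCycle ~r d := by
  obtain ⟨m, hm⟩ := rootPath_isRotated_map_root hd hdP.2.1 hmem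
  rw [eq_rotate_liftCycle (a.isSimpleCycle_rootPath hab.1) hd hm.symm (List.of_mem_zip hmem).1
    fun v hv => a.cut_out_of_not_mem (List.mem_toFinset.2 (a.root_mem_rootPath b.root))
      (by simpa using hv)]
  exact ⟨m, rfl⟩

end EdgeCycle

section Partition

variable {V : Type*} [Fintype V] {E : V → V → Prop}

theorem exists_partition_tStep_into_lifted_cycles (hs : ∀ v, ¬ E v v) :
    ∃ 𝒞 : Set (List (SpTree E)),
      (∀ c ∈ 𝒞, IsSimpleCycle (TStep E) c ∧ IsSimpleCycle E (c.map SpTree.root)) ∧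
      ∀ a b : SpTree E, TStep E a b → ∃! c, c ∈ 𝒞 ∧ (a, b) ∈ c.zip (c.rotate 1) := by
  -- keep one representative of each rotation class
  let rep : List (SpTree E) → List (SpTree E) := fun c => Quotient.out (c : Cycle (SpTree E))
  have hrep : ∀ c, rep c ~r c := fun c => Cycle.coe_eq_coe.1 (Quotient.out_eq _)
  have hrep_eq : ∀ {c c'}, c ~r c' → rep c = rep c' := fun h =>
    congrArg Quotient.out (Cycle.coe_eq_coe.2 h)
  refine ⟨{c | IsSimpleCycle (TStep E) c ∧ IsSimpleCycle E (c.map SpTree.root) ∧ rep c = c},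
    fun c hc => ⟨hc.1, hc.2.1⟩,
    fun a b hab => ⟨rep hab.liftedCycle, ⟨⟨?_, ?_, ?_⟩, ?_⟩, ?_⟩⟩
  · exact (hab.isSimpleCycle_liftedCycle hs).of_isRotated (hrep _).symm
  · refine (a.isSimpleCycle_rootPath hab.1).of_isRotated ?_
    rw [← hab.map_root_liftedCycle]
    exact (hrep _).symm.map _
  · exact hrep_eq (hrep _)
  · exact List.mem_zip_rotate_one_of_isRotated (hrep _).symm (hab.mem_zip_liftedCycle hs)
  · rintro d ⟨⟨hd, hdP, hdrep⟩, hmem⟩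
    rw [← hdrep]
    exact hrep_eq (hab.liftedCycle_isRotated hd hdP hmem).symm

theorem card_isSimpleCycle_tStep_over (hs : ∀ v, ¬ E v v) {c : List V}
    (hc : IsSimpleCycle E c) :
    Nat.card {d : List (SpTree E) //
        IsSimpleCycle (TStep E) d ∧ ∃ m, d.map SpTree.root = c.rotate m} =
      c.length * Nat.card (SpForest E c.toFinset) := by
  let φ : Fin c.length × SpForest E c.toFinset → {d : List (SpTree E) //
      IsSimpleCycle (TStep E) d ∧ ∃ m, d.map SpTree.root = c.rotate m} := fun p =>
    ⟨(liftCycle hc p.2).rotate p.1, (isSimpleCycle_liftCycle hs hc p.2).rotate _, p.1,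
      by rw [List.map_rotate, map_root_liftCycle]⟩
  have hφ : Function.Bijective φ := by
    refine ⟨fun p p' h => rotate_liftCycle_injective hc (congrArg Subtype.val h),
      fun ⟨d, hd, m, hm⟩ => ?_⟩
    obtain ⟨i, f, h⟩ := exists_rotate_liftCycle_eq hc hd hm
    exact ⟨(i, f), Subtype.ext h⟩
  rw [← Nat.card_congr (Equiv.ofBijective φ hφ), Nat.card_prod,
    Nat.card_eq_fintype_card (α := Fin _), Fintype.card_fin]

end Partition

end

/-- Simple cycles of `𝒯G` are counted as lists, so each one is represented by its
`c.length` rotations. -/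
theorem statement3_general {V : Type} [Fintype V] (E : V → V → Prop)
    (hsimple : ∀ v, ¬ E v v) :
    (∃ 𝒞 : Set (List (SpTree E)),
      (∀ c ∈ 𝒞, IsSimpleCycle (TStep E) c ∧ IsSimpleCycle E (c.map SpTree.root)) ∧
      (∀ a b : SpTree E, TStep E a b →
        ∃! c, c ∈ 𝒞 ∧ (a, b) ∈ c.zip (c.rotate 1))) ∧
    (∀ c : List V, IsSimpleCycle E c →
      Nat.card {d : List (SpTree E) //
          IsSimpleCycle (TStep E) d ∧ ∃ m, d.map SpTree.root = c.rotate m} =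
        c.length * Nat.card (SpForest E c.toFinset)) :=
  ⟨exists_partition_tStep_into_lifted_cycles hsimple,
    fun _ hc => card_isSimpleCycle_tStep_over hsimple hc⟩

/-- The edge set of the tree graph `𝒯G` can be partitioned into
edge-disjoint simple directed cycles, each of which projects (bijectively) under `p`
onto a simple directed cycle of `G`; moreover, for every simple directed cycle `c`
of `G` with vertex set `W`, the number of simple cycles of `𝒯G` lying above `c`
(counted here as lists, each geometric cycle being represented by its
`c.length` rotations) equals the number of oriented forests of `G` rooted in `W`. -/
theorem statement3 {V : Type} [Fintype V] (E : V → V → Prop)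
    (hsimple : ∀ v, ¬ E v v) (hsc : SConn E Set.univ) :
    (∃ 𝒞 : Set (List (SpTree E)),
      (∀ c ∈ 𝒞, IsSimpleCycle (TStep E) c ∧ IsSimpleCycle E (c.map SpTree.root)) ∧
      (∀ a b : SpTree E, TStep E a b →
        ∃! c, c ∈ 𝒞 ∧ (a, b) ∈ c.zip (c.rotate 1))) ∧
    (∀ c : List V, IsSimpleCycle E c →
      Nat.card {d : List (SpTree E) //
          IsSimpleCycle (TStep E) d ∧ ∃ m, d.map SpTree.root = c.rotate m} =
        c.length * Nat.card (SpForest E c.toFinset)) :=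
  statement3_general E hsimple
end

section
/- Let G = (V,E) be a finite simple strongly connected directed graph. Then the tree graph 𝒯G is Eulerian: for every oriented spanning tree 𝐚 of G, the indegree and the outdegree of 𝐚 in 𝒯G are both equal to the outdegree in G of the root of 𝐚. -/
open Classical Finset

noncomputable section AuxStatement4
open Classical Finset

variable {V : Type} [Fintype V] {E : V → V → Prop}

private lemma iterate_mod' {f : V → V} {x : V} {p : ℕ} (hp : f^[p] x = x) (j : ℕ) :
    f^[j] x = f^[j % p] x := by
  conv_lhs => rw [← Nat.mod_add_div j p]
  rw [Function.iterate_add_apply, Function.iterate_mul, Function.iterate_fixed hp]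

/-- Replace the edge out of `a.root` by the edge to `u`, and make `w` the new root. -/
def retree (a : SpTree E) (u w : V) : V → V :=
  fun v => if v = w then w else if v = a.root then u else a.out v

private lemma retree_agree (a : SpTree E) (u w : V) (v : V) :
    ∀ k, (∀ i < k, a.out^[i] v ≠ w ∧ a.out^[i] v ≠ a.root) →
      (retree a u w)^[k] v = a.out^[k] v := by
  intro k
  induction k with
  | zero => intro _; rfl
  | succ k ih =>
    intro h
    rw [Function.iterate_succ_apply', Function.iterate_succ_apply',
      ih (fun i hi => h i (Nat.lt_succ_of_lt hi))]
    have hk := h k (Nat.lt_succ_self k)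
    simp [retree, hk.1, hk.2]

private lemma retree_reach_aux (a : SpTree E) (u w : V) (v : V)
    (h : ∃ j, a.out^[j] v = w ∧ ∀ i ≤ j, a.out^[i] v ≠ a.root) :
    ∃ k, (retree a u w)^[k] v = w := by
  obtain ⟨j, hj, hroot⟩ := h
  have hex : ∃ j, a.out^[j] v = w := ⟨j, hj⟩
  set j0 := Nat.find hex with hj0def
  have hj0 : a.out^[j0] v = w := Nat.find_spec hex
  have hj0le : j0 ≤ j := Nat.find_le hj
  refine ⟨j0, ?_⟩
  rw [retree_agree a u w v j0 (fun i hi => ⟨Nat.find_min hex hi,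
    hroot i (le_of_lt (lt_of_lt_of_le hi hj0le))⟩)]
  exact hj0

private lemma retree_reach (a : SpTree E) (u w : V) (hw : w ≠ a.root)
    (h1 : ∃ j, a.out^[j] u = w ∧ ∀ i ≤ j, a.out^[i] u ≠ a.root) (v : V) :
    ∃ k, (retree a u w)^[k] v = w := by
  have hexm : ∃ m, a.out^[m] v = a.root := a.reach v
  set m := Nat.find hexm with hmdef
  have hm : a.out^[m] v = a.root := Nat.find_spec hexm
  by_cases hcase : ∃ j ≤ m, a.out^[j] v = w
  · obtain ⟨j, hjm, hj⟩ := hcase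
    apply retree_reach_aux
    refine ⟨j, hj, fun i hi => ?_⟩
    have hjm' : j < m := lt_of_le_of_ne hjm (by rintro rfl; exact hw (hj ▸ hm.symm ▸ rfl) )
    exact Nat.find_min hexm (lt_of_le_of_lt hi hjm')
  · push_neg at hcase
    have hagree : (retree a u w)^[m] v = a.out^[m] v :=
      retree_agree a u w v m (fun i hi => ⟨hcase i (le_of_lt hi), Nat.find_min hexm hi⟩)
    have hstep : (retree a u w)^[m+1] v = u := by
      rw [Function.iterate_succ_apply', hagree, hm]
      simp [retree, hw.symm]
    obtain ⟨k, hk⟩ := retree_reach_aux a u w u h1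
    refine ⟨k + (m+1), ?_⟩
    rw [Function.iterate_add_apply, hstep, hk]

/-- The tree obtained from `a` by adding the edge `(a.root, u)` and rerooting at `w`. -/
def mkTree (a : SpTree E) (u w : V) (hE : E a.root u) (hw : w ≠ a.root)
    (h1 : ∃ j, a.out^[j] u = w ∧ ∀ i ≤ j, a.out^[i] u ≠ a.root) : SpTree E where
  root := w
  out := retree a u w
  out_root := by simp [retree]
  edge_mem := fun v hv => by
    by_cases hva : v = a.root
    · subst hva
      simpa [retree, hv, hw.symm] using hE
    · have := a.edge_mem v hva
      simpa [retree, hv, hva] using this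
  reach := fun v => retree_reach a u w hw h1 v

private lemma tstep_key (hsimple : ∀ v, ¬ E v v) {a b : SpTree E} (h : TStep E b a) :
    ∃ k, a.out^[k] (b.out a.root) = b.root ∧
      ∀ i ≤ k, a.out^[i] (b.out a.root) ≠ a.root := by
  set u := b.out a.root with hudef
  have hu : E a.root u := b.edge_mem a.root (Ne.symm h.2.1)
  have hune : u ≠ a.root := fun hh => hsimple a.root (hh ▸ hu)
  have hexm : ∃ m, b.out^[m] u = b.root := b.reach u
  set m := Nat.find hexm with hmdef
  have hm : b.out^[m] u = b.root := Nat.find_spec hexm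
  have key : ∀ k, k ≤ m → b.out^[k] u = a.out^[k] u ∧ (k < m → a.out^[k] u ≠ a.root) := by
    intro k
    induction k with
    | zero => exact fun _ => ⟨rfl, fun _ => hune⟩
    | succ k ih =>
      intro hk1
      obtain ⟨heq, hne⟩ := ih (Nat.le_of_succ_le hk1)
      have hklt : k < m := Nat.lt_of_succ_le hk1
      have hkroot : a.out^[k] u ≠ a.root := hne hklt
      have hkb : b.out^[k] u ≠ b.root := Nat.find_min hexm hklt
      have hstep : b.out^[k+1] u = a.out^[k+1] u := by
        rw [Function.iterate_succ_apply', Function.iterate_succ_apply', heq]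
        exact (h.2.2.2 _ (heq ▸ hkb) hkroot).symm
      refine ⟨hstep, fun hk1m => ?_⟩
      by_contra hcontra
      -- periodic orbit avoiding b.root, contradiction with hm
      have hper : b.out^[k+2] u = u := by
        have : b.out^[k+1] u = a.root := hstep.trans hcontra
        rw [show k+2 = k+1+1 from rfl, Function.iterate_succ_apply', this, ← hudef]
      have hmod := iterate_mod' hper m
      have hlt : m % (k+2) < k + 2 := Nat.mod_lt _ (Nat.succ_pos _)
      have hltm : m % (k+2) < m := lt_of_lt_of_le hlt (Nat.succ_le_of_lt hk1m)
      exact Nat.find_min hexm hltm (hmod ▸ hm)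
  obtain ⟨heq, _⟩ := key m (le_refl m)
  refine ⟨m, heq.symm.trans hm, fun i hi => ?_⟩
  rcases lt_or_eq_of_le hi with hi | hi
  · exact (key i (le_of_lt hi)).2 hi
  · subst hi
    rw [heq.symm.trans hm]
    exact h.2.1

private lemma root_det (a : SpTree E) (u : V) {k k' : ℕ}
    (h : ∀ i ≤ k, a.out^[i] u ≠ a.root) (h' : ∀ i ≤ k', a.out^[i] u ≠ a.root)
    (hk : a.out (a.out^[k] u) = a.root) (hk' : a.out (a.out^[k'] u) = a.root) :
    k = k' := by
  have hk1 : a.out^[k+1] u = a.root := by rw [Function.iterate_succ_apply']; exact hk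
  have hk1' : a.out^[k'+1] u = a.root := by rw [Function.iterate_succ_apply']; exact hk'
  have h1 : k' ≤ k := by
    by_contra hh
    push_neg at hh
    exact h' (k+1) (Nat.succ_le_of_lt hh) hk1
  have h2 : k ≤ k' := by
    by_contra hh
    push_neg at hh
    exact h (k'+1) (Nat.succ_le_of_lt hh) hk1'
  omega

end AuxStatement4

/-- The tree graph `𝒯G` of a finite simple strongly connected
digraph is Eulerian: for every oriented spanning tree `𝐚` of `G`, the outdegree and
the indegree of `𝐚` in `𝒯G` both equal the outdegree in `G` of the root of `𝐚`. -/
theorem statement4 {V : Type} [Fintype V] (E : V → V → Prop)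
    (hsimple : ∀ v, ¬ E v v) (hsc : SConn E Set.univ) (a : SpTree E) :
    (univ.filter (fun b => TStep E a b)).card
        = (univ.filter (fun u => E a.root u)).card ∧
      (univ.filter (fun b => TStep E b a)).card
        = (univ.filter (fun u => E a.root u)).card := by
  classical
  have hune : ∀ u, E a.root u → u ≠ a.root := fun u hu hh => hsimple a.root (hh ▸ hu)
  constructor
  · -- outdegree
    apply Finset.card_bij (fun b _ => b.root)
    · intro b hb
      simp only [mem_filter, mem_univ, true_and] at hb ⊢
      exact hb.1
    · intro b1 hb1 b2 hb2 hroot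
      simp only [mem_filter, mem_univ, true_and] at hb1 hb2
      apply SpTree.ext' hroot
      funext v
      by_cases hv1 : v = b1.root
      · subst hv1
        rw [b1.out_root, hroot, b2.out_root]
      · have hv2 : v ≠ b2.root := hroot ▸ hv1
        by_cases hva : v = a.root
        · subst hva
          rw [hb1.2.2.1, hb2.2.2.1, hroot]
        · rw [hb1.2.2.2 v hva hv1, hb2.2.2.2 v hva hv2]
    · intro u hu
      simp only [mem_filter, mem_univ, true_and] at hu
      have hune' : u ≠ a.root := hune u hu
      refine ⟨mkTree a u u hu hune'
        ⟨0, rfl, fun i hi => by rw [Nat.le_zero.mp hi]; exact hune'⟩, ?_, rfl⟩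
      simp only [mem_filter, mem_univ, true_and]
      refine ⟨hu, Ne.symm hune', ?_, ?_⟩
      · show retree a u u a.root = u
        simp [retree]
      · intro v hva hvu
        show retree a u u v = a.out v
        simp [retree, hva, show v ≠ u from hvu]
  · -- indegree
    apply Finset.card_bij (fun b _ => b.out a.root)
    · intro b hb
      simp only [mem_filter, mem_univ, true_and] at hb ⊢
      exact b.edge_mem a.root (Ne.symm hb.2.1)
    · intro b1 hb1 b2 hb2 hout
      simp only [mem_filter, mem_univ, true_and] at hb1 hb2
      obtain ⟨k1, hk1, hr1⟩ := tstep_key hsimple hb1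
      obtain ⟨k2, hk2, hr2⟩ := tstep_key hsimple hb2
      rw [← hout] at hk2 hr2
      have hkk : k1 = k2 := root_det a _ hr1 hr2
        (by rw [hk1]; exact hb1.2.2.1) (by rw [hk2]; exact hb2.2.2.1)
      have hroot : b1.root = b2.root := by rw [← hk1, hkk, hk2]
      apply SpTree.ext' hroot
      funext v
      by_cases hv1 : v = b1.root
      · subst hv1
        rw [b1.out_root, hroot, b2.out_root]
      · have hv2 : v ≠ b2.root := hroot ▸ hv1
        by_cases hva : v = a.root
        · subst hva; exact hout
        · rw [← hb1.2.2.2 v hv1 hva, ← hb2.2.2.2 v hv2 hva]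
    · intro u hu
      simp only [mem_filter, mem_univ, true_and] at hu
      have hune' : u ≠ a.root := hune u hu
      have hexn : ∃ n, a.out^[n] u = a.root := a.reach u
      set n := Nat.find hexn with hndef
      have hn : a.out^[n] u = a.root := Nat.find_spec hexn
      have hn0 : n ≠ 0 := by
        intro hh
        rw [hh] at hn
        exact hune' hn
      have hn1 : n - 1 < n := Nat.pred_lt hn0
      set w := a.out^[n-1] u with hwdef
      have hwr : w ≠ a.root := Nat.find_min hexn hn1
      have houtw : a.out w = a.root := by
        have h2 : a.out^[n-1+1] u = a.root := by
          rw [Nat.sub_add_cancel (Nat.one_le_iff_ne_zero.mpr hn0)]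
          exact hn
        rw [Function.iterate_succ_apply'] at h2
        exact hwdef ▸ h2
      have h1 : ∃ j, a.out^[j] u = w ∧ ∀ i ≤ j, a.out^[i] u ≠ a.root :=
        ⟨n - 1, rfl, fun i hi => Nat.find_min hexn (lt_of_le_of_lt hi hn1)⟩
      refine ⟨mkTree a u w hu hwr h1, ?_, ?_⟩
      · simp only [mem_filter, mem_univ, true_and]
        refine ⟨by rw [← houtw]; exact a.edge_mem w hwr, hwr, houtw, ?_⟩
        intro v hvw hva
        show a.out v = retree a u w v
        simp [retree, hva, show v ≠ w from hvw]
      · show retree a u w a.root = u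
        simp [retree, Ne.symm hwr]
end

section
/- Let G = (V,E) be a finite simple strongly connected directed graph. For any directed path π in G starting at a vertex v and any oriented spanning tree 𝐚 of G rooted at v, there exists a unique directed path in the tree graph 𝒯G starting at 𝐚 whose projection under p is π; in other words, 𝒯G is a covering graph of G. -/
open Classical Finset

/-
An edge from `a.root` to `w ≠ a.root` lifts uniquely: the target tree must fix `w`, send
`a.root` to `w` and agree with `a` elsewhere, and this map is a spanning tree since iterating
it from any vertex follows `a` down to `a.root` and then jumps to `w`. As `G` has no loops,
paths then lift uniquely edge by edge, as for any map of graphs with unique lifting of edges.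
-/

namespace List

variable {α β : Type*} {r : α → α → Prop} {s : β → β → Prop} (f : α → β)

theorem existsUnique_isChain_cons_lift (hlift : ∀ a b, s (f a) b → ∃! a', r a a' ∧ f a' = b)
    (t : List β) (a : α) (ht : (f a :: t).IsChain s) :
    ∃! L : List α, (a :: L).IsChain r ∧ L.map f = t := by
  induction t generalizing a with
  | nil => exact ⟨[], ⟨isChain_singleton a, rfl⟩, fun L ⟨_, hL⟩ => map_eq_nil_iff.mp hL⟩
  | cons b t ih =>
    obtain ⟨hab, ht⟩ := isChain_cons_cons.mp ht
    obtain ⟨a', ⟨haa', rfl⟩, ha'_unique⟩ := hlift a _ hab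
    obtain ⟨L, ⟨hL, rfl⟩, hL_unique⟩ := ih a' ht
    refine ⟨a' :: L, ⟨isChain_cons_cons.mpr ⟨haa', hL⟩, rfl⟩, ?_⟩
    rintro (_ | ⟨m, M⟩) ⟨hM, hMf⟩
    · cases hMf
    · obtain ⟨hfm, hMf_tail⟩ := cons_eq_cons.mp hMf
      obtain ⟨ham, hM⟩ := isChain_cons_cons.mp hM
      obtain rfl := ha'_unique m ⟨ham, hfm⟩
      rw [hL_unique M ⟨hM, hMf_tail⟩]

theorem existsUnique_isChain_lift (hlift : ∀ a b, s (f a) b → ∃! a', r a a' ∧ f a' = b)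
    (l : List β) (hl : l.IsChain s) (a : α) (hstart : l.head? = some (f a)) :
    ∃! L : List α, L.IsChain r ∧ L.head? = some a ∧ L.map f = l := by
  obtain ⟨t, rfl⟩ : ∃ t, l = f a :: t := by
    cases l with
    | nil => cases hstart
    | cons b t => exact ⟨t, by rw [Option.some_inj.mp hstart]⟩
  obtain ⟨L, ⟨hL, hLf⟩, hL_unique⟩ := existsUnique_isChain_cons_lift f hlift t a hl
  refine ⟨a :: L, ⟨hL, rfl, by rw [map_cons, hLf]⟩, ?_⟩
  rintro (_ | ⟨m, M⟩) ⟨hM, hMa, hMf⟩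
  · cases hMa
  · obtain rfl := Option.some_inj.mp hMa
    rw [hL_unique M ⟨hM, (cons_eq_cons.mp hMf).2⟩]

end List

namespace SpTree

variable {V : Type*} [Fintype V] {E : V → V → Prop}

noncomputable def addRootEdge (a : SpTree E) (w : V) (hE : E a.root w) : SpTree E where
  root := w
  out v := if v = w ∨ v = a.root then w else a.out v
  out_root := if_pos (Or.inl rfl)
  edge_mem v hvw := by
    by_cases hva : v = a.root
    · rw [if_pos (Or.inr hva), hva]
      exact hE
    · rw [if_neg (by tauto)]
      exact a.edge_mem v hva
  reach v := by
    obtain ⟨n, hn⟩ := a.reach v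
    refine ⟨n + 1, ?_⟩
    induction n generalizing v with
    | zero => simp [← hn]
    | succ n ih =>
      rw [Function.iterate_succ_apply]
      split_ifs
      · exact Function.iterate_fixed (by simp) _
      · exact ih _ hn

theorem tStep_addRootEdge (a : SpTree E) {w : V} (hE : E a.root w) (hne : a.root ≠ w) :
    TStep E a (a.addRootEdge w hE) :=
  ⟨hE, hne, if_pos (Or.inr rfl), fun v hva hvw => if_neg (by tauto)⟩

theorem eq_addRootEdge_of_tStep {a b : SpTree E} (h : TStep E a b) :
    b = a.addRootEdge b.root h.1 := by
  obtain ⟨-, -, hout_a, hout⟩ := h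
  refine ext' rfl (funext fun v => ?_)
  show b.out v = if v = b.root ∨ v = a.root then b.root else a.out v
  split_ifs with hv
  · rcases hv with rfl | rfl
    exacts [b.out_root, hout_a]
  · exact hout v (by tauto) (by tauto)

theorem existsUnique_tStep_root (a : SpTree E) {w : V} (hE : E a.root w) (hne : a.root ≠ w) :
    ∃! b : SpTree E, TStep E a b ∧ b.root = w :=
  ⟨a.addRootEdge w hE, ⟨a.tStep_addRootEdge hE hne, rfl⟩, fun b ⟨hab, hb⟩ => by
    subst hb
    exact eq_addRootEdge_of_tStep hab⟩

end SpTree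

theorem statement5_general {V : Type} [Fintype V] (E : V → V → Prop)
    (hsimple : ∀ v, ¬ E v v)
    (l : List V) (hl : l.Chain' E) (a : SpTree E) (hstart : l.head? = some a.root) :
    ∃! L : List (SpTree E),
      L.Chain' (TStep E) ∧ L.head? = some a ∧ L.map SpTree.root = l :=
  List.existsUnique_isChain_lift SpTree.root
    (fun b w hE => b.existsUnique_tStep_root hE fun h => hsimple w (h ▸ hE :)) l hl a hstart

/-- The tree graph is a covering graph of `G`: every directed path
of `G` (encoded as the list of its vertices) starting at the root of an oriented
spanning tree `𝐚` lifts to a unique directed path of `𝒯G` starting at `𝐚` whose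
projection (vertexwise, by taking roots) is the given path. -/
theorem statement5 {V : Type} [Fintype V] (E : V → V → Prop)
    (hsimple : ∀ v, ¬ E v v) (hsc : SConn E Set.univ)
    (l : List V) (hl : l.Chain' E) (a : SpTree E) (hstart : l.head? = some a.root) :
    ∃! L : List (SpTree E),
      L.Chain' (TStep E) ∧ L.head? = some a ∧ L.map SpTree.root = l :=
  statement5_general E hsimple l hl a hstart
end

section
/- Let G = (V,E) be a finite simple strongly connected directed graph. The row vector assigning to each oriented spanning tree 𝐚 the weight π_𝐚 is a left null vector of the lifted Laplacian 𝒬 of the tree graph: for every oriented spanning tree 𝐛 of G, Σ_{𝐚 ∈ 𝒯V} π_𝐚 · 𝒬_{𝐚𝐛} = 0. -/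
open Classical Finset

noncomputable section StationaryAux
set_option linter.unusedSectionVars false
variable {V : Type*} [Fintype V] {E : V → V → Prop}

open Classical in
noncomputable def predN (b : SpTree E) (z : V) : ℕ := Nat.find (b.reach z)

open Classical in
lemma predN_spec (b : SpTree E) (z : V) : b.out^[predN b z] z = b.root :=
  Nat.find_spec (b.reach z)

open Classical in
lemma predN_min (b : SpTree E) (z : V) {k : ℕ} (hk : k < predN b z) :
    b.out^[k] z ≠ b.root :=
  Nat.find_min (b.reach z) hk

open Classical in
lemma predN_le (b : SpTree E) {z : V} {k : ℕ} (hk : b.out^[k] z = b.root) :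
    predN b z ≤ k := Nat.find_le hk

lemma predN_eq (b : SpTree E) {z : V} {m : ℕ} (h1 : b.out^[m] z = b.root)
    (h2 : ∀ j, j < m → b.out^[j] z ≠ b.root) : predN b z = m :=
  le_antisymm (predN_le b h1) (le_of_not_gt fun hlt => h2 _ hlt (predN_spec b z))

lemma predN_pos (b : SpTree E) {z : V} (hz : z ≠ b.root) : 0 < predN b z := by
  rcases Nat.eq_zero_or_pos (predN b z) with h | h
  · exact absurd (by simpa [h] using predN_spec b z) hz
  · exact h

noncomputable def predV (b : SpTree E) (z : V) : V := b.out^[predN b z - 1] z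

lemma predV_out (b : SpTree E) {z : V} (hz : z ≠ b.root) :
    b.out (predV b z) = b.root := by
  have h := predN_spec b z
  rw [← Nat.succ_pred_eq_of_pos (predN_pos b hz), Function.iterate_succ_apply'] at h
  exact h

lemma predV_ne_root (b : SpTree E) {z : V} (hz : z ≠ b.root) :
    predV b z ≠ b.root :=
  predN_min b z (Nat.sub_lt (predN_pos b hz) one_pos)


noncomputable def pushOut (b : SpTree E) (z : V) : V → V :=
  fun v => if v = z then z else if v = b.root then z else b.out v

lemma pushOut_self (b : SpTree E) (z : V) : pushOut b z z = z := by simp [pushOut]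

lemma pushOut_root (b : SpTree E) (z : V) : pushOut b z b.root = z := by
  unfold pushOut; split <;> simp_all

lemma pushOut_other (b : SpTree E) (z : V) {v : V} (h1 : v ≠ z) (h2 : v ≠ b.root) :
    pushOut b z v = b.out v := by simp [pushOut, h1, h2]

lemma push_reach (b : SpTree E) (z : V) (c : V → V)
    (hcz : c z = z) (hcw : c b.root = z)
    (hc : ∀ v, v ≠ z → v ≠ b.root → c v = b.out v) :
    ∀ n v, b.out^[n] v = b.root → ∃ m, c^[m] v = z := by
  intro n
  induction n with
  | zero =>
    intro v hv
    simp only [Function.iterate_zero, id] at hv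
    exact ⟨1, by simp [hv, hcw]⟩
  | succ n ih =>
    intro v hv
    by_cases h1 : v = z
    · exact ⟨0, by simp [h1]⟩
    by_cases h2 : v = b.root
    · exact ⟨1, by simp [h2, hcw]⟩
    · rw [Function.iterate_succ_apply] at hv
      obtain ⟨m, hm⟩ := ih (b.out v) hv
      exact ⟨m + 1, by rw [Function.iterate_succ_apply, hc v h1 h2]; exact hm⟩

noncomputable def pushTree (b : SpTree E) (z : V) (hz : E b.root z) (hzw : z ≠ b.root) :
    SpTree E where
  root := z
  out := pushOut b z
  out_root := pushOut_self b z
  edge_mem v hv := by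
    unfold pushOut
    rw [if_neg hv]
    split
    · next h => subst h; exact hz
    · next h => exact b.edge_mem v h
  reach v := by
    obtain ⟨n, hn⟩ := b.reach v
    exact push_reach b z _ (pushOut_self b z) (pushOut_root b z)
      (fun v h1 h2 => pushOut_other b z h1 h2) n v hn

lemma pushTree_congr (b : SpTree E) {z1 z2 : V} (h : z1 = z2)
    (p1 : E b.root z1) (q1 : z1 ≠ b.root) (p2 : E b.root z2) (q2 : z2 ≠ b.root) :
    pushTree b z1 p1 q1 = pushTree b z2 p2 q2 := by subst h; rfl

noncomputable def pullOut (b : SpTree E) (z : V) : V → V :=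
  fun v => if v = predV b z then predV b z else if v = b.root then z else b.out v

lemma pullOut_self (b : SpTree E) (z : V) : pullOut b z (predV b z) = predV b z := by
  simp [pullOut]

lemma pullOut_root (b : SpTree E) {z : V} (hz : z ≠ b.root) :
    pullOut b z b.root = z := by
  simp [pullOut, Ne.symm (predV_ne_root b hz)]

lemma pullOut_other (b : SpTree E) (z : V) {v : V} (h1 : v ≠ predV b z)
    (h2 : v ≠ b.root) : pullOut b z v = b.out v := by simp [pullOut, h1, h2]

lemma pull_reach (b : SpTree E) {z : V} (hzw : z ≠ b.root) (v : V) :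
    ∃ m, (pullOut b z)^[m] v = predV b z := by
  have hA : ∀ k, k ≤ predN b z - 1 → (pullOut b z)^[k] z = b.out^[k] z := by
    intro k
    induction k with
    | zero => intro _; rfl
    | succ k ih =>
      intro hk
      have hk' : k ≤ predN b z - 1 := Nat.le_of_succ_le hk
      have hkn : k < predN b z :=
        lt_of_le_of_lt hk' (Nat.sub_lt (predN_pos b hzw) one_pos)
      rw [Function.iterate_succ_apply', Function.iterate_succ_apply', ih hk']
      have hvw : b.out^[k] z ≠ b.root := predN_min b z hkn
      have hvu : b.out^[k] z ≠ predV b z := by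
        intro h
        have : b.out^[k + 1] z = b.root := by
          rw [Function.iterate_succ_apply', h, predV_out b hzw]
        exact predN_min b z
          (lt_of_le_of_lt hk (Nat.sub_lt (predN_pos b hzw) one_pos)) this
      exact pullOut_other b z hvu hvw
  have hB : (pullOut b z)^[predN b z - 1] z = predV b z := hA _ le_rfl
  have hroot : ∃ j, (pullOut b z)^[j] b.root = predV b z := by
    refine ⟨(predN b z - 1) + 1, ?_⟩
    rw [Function.iterate_succ_apply, pullOut_root b hzw, hB]
  have hC : ∀ m w, b.out^[m] w = b.root → ∃ j, (pullOut b z)^[j] w = predV b z := by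
    intro m
    induction m with
    | zero =>
      intro w hw
      simp only [Function.iterate_zero, id] at hw
      exact hw ▸ hroot
    | succ m ih =>
      intro w hw
      by_cases h1 : w = predV b z
      · exact ⟨0, by simp [h1]⟩
      by_cases h2 : w = b.root
      · exact h2 ▸ hroot
      · rw [Function.iterate_succ_apply] at hw
        obtain ⟨j, hj⟩ := ih (b.out w) hw
        exact ⟨j + 1, by rw [Function.iterate_succ_apply, pullOut_other b z h1 h2]; exact hj⟩
  obtain ⟨m, hm⟩ := b.reach v
  exact hC m v hm

noncomputable def pullTree (b : SpTree E) (z : V) (hz : E b.root z) (hzw : z ≠ b.root) :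
    SpTree E where
  root := predV b z
  out := pullOut b z
  out_root := pullOut_self b z
  edge_mem v hv := by
    unfold pullOut
    rw [if_neg hv]
    split
    · next h => subst h; exact hz
    · next h => exact b.edge_mem v h
  reach := pull_reach b hzw


lemma root_eq_predV {a b : SpTree E} (h : TStep E a b)
    (hzw : a.out b.root ≠ b.root) : a.root = predV b (a.out b.root) := by
  set z := a.out b.root with hzdef
  have hwu : b.root ≠ a.root := (h.2.1).symm
  have hbu : b.out a.root = b.root := h.2.2.1
  by_cases hzu : z = a.root
  · have h1 : b.out^[1] z = b.root := by
      simpa [hzu] using hbu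
    have hn : predN b z = 1 := predN_eq b h1 (by
      intro j hj
      interval_cases j
      simpa using hzw)
    have : predV b z = z := by simp [predV, hn]
    rw [this, hzu]
  · -- z ≠ a.root; use minimal a-path from z to a.root
    have hm0 : 0 < predN a z := predN_pos a hzu
    have claim : ∀ j, j ≤ predN a z →
        a.out^[j] z = b.out^[j] z ∧ a.out^[j] z ≠ b.root := by
      intro j
      induction j with
      | zero => exact fun _ => ⟨rfl, hzw⟩
      | succ j ih =>
        intro hj
        obtain ⟨heq, hne⟩ := ih (Nat.le_of_succ_le hj)
        have hvu : a.out^[j] z ≠ a.root := predN_min a z (lt_of_lt_of_le (Nat.lt_succ_self j) hj)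
        constructor
        · rw [Function.iterate_succ_apply', Function.iterate_succ_apply', heq,
            h.2.2.2 _ (heq ▸ hvu) (heq ▸ hne)]
        · intro hcon
          rcases eq_or_lt_of_le hj with hjm | hjm
          · have : a.out^[j+1] z = a.root := by rw [hjm]; exact predN_spec a z
            exact hwu (hcon ▸ this)
          · have hper : a.out^[j+2] z = z := by
              rw [show j+2 = (j+1)+1 from rfl, Function.iterate_succ_apply', hcon,
                ← hzdef]
            have hsplit : a.out^[predN a z] z = a.out^[predN a z - (j+2)] z := by
              conv_lhs => rw [show predN a z = (predN a z - (j+2)) + (j+2) from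
                (Nat.sub_add_cancel hjm).symm]
              rw [Function.iterate_add_apply, hper]
            have : a.out^[predN a z - (j+2)] z = a.root := by
              rw [← hsplit]; exact predN_spec a z
            exact predN_min a z (Nat.sub_lt (lt_of_le_of_lt (Nat.zero_le _) hjm)
              (Nat.succ_pos _)) this
    obtain ⟨heqm, _⟩ := claim _ le_rfl
    have hbm : b.out^[predN a z] z = a.root := heqm ▸ predN_spec a z
    have hfind : predN b z = predN a z + 1 := by
      apply predN_eq
      · rw [Function.iterate_succ_apply', hbm, hbu]
      · intro j hj
        obtain ⟨heq, hne⟩ := claim j (Nat.lt_succ_iff.mp hj)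
        exact heq ▸ hne
    have : predV b z = b.out^[predN a z] z := by simp [predV, hfind]
    rw [this, hbm]

open Classical in
lemma treeWt_mul {R : Type*} [CommRing R] (x : V × V → R) (t : SpTree E) (s : V) :
    treeWt x t * x (t.root, s) = ∏ v, x (v, Function.update t.out t.root s v) := by
  rw [← Finset.mul_prod_erase univ _ (mem_univ t.root), Function.update_self, mul_comm]
  congr 1
  unfold treeWt
  rw [Finset.filter_ne']
  exact Finset.prod_congr rfl fun v hv => by
    rw [Function.update_of_ne (Finset.ne_of_mem_erase hv)]

open Classical in
lemma step_wt {R : Type*} [CommRing R] (x : V × V → R) {a b : SpTree E}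
    (h : TStep E a b) :
    treeWt x a * x (a.root, b.root) = treeWt x b * x (b.root, a.out b.root) := by
  rw [treeWt_mul, treeWt_mul]
  have : Function.update a.out a.root b.root
      = Function.update b.out b.root (a.out b.root) := by
    funext v
    rcases eq_or_ne v a.root with rfl | h1
    · rw [Function.update_self, Function.update_of_ne h.2.1, h.2.2.1]
    rcases eq_or_ne v b.root with rfl | h2
    · rw [Function.update_of_ne h1, Function.update_self]
    · rw [Function.update_of_ne h1, Function.update_of_ne h2, h.2.2.2 v h1 h2]
  rw [this]


open Classical in
theorem key {R : Type*} [CommRing R] {E : V → V → Prop}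
    (hsimple : ∀ v, ¬ E v v) (b : SpTree E) (x : V × V → R) :
    ∑ a : SpTree E, treeWt x a * lapM (TStep E) (xT E x) a b = 0 := by
  classical
  -- diagonal entry
  have hdiag : lapM (TStep E) (xT E x) b b
      = -(∑ c ∈ univ.filter (fun c => TStep E b c), x (b.root, c.root)) := by
    simp [lapM, xT]
  -- off diagonal entries
  have hoff : ∀ a ∈ univ.erase b, treeWt x a * lapM (TStep E) (xT E x) a b
      = if TStep E a b then treeWt x a * x (a.root, b.root) else 0 := by
    intro a ha
    have hne : a ≠ b := Finset.ne_of_mem_erase ha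
    simp only [lapM, Matrix.of_apply, if_neg hne, xT]
    rw [mul_ite, mul_zero]
  have hfe : (univ.erase b).filter (fun a => TStep E a b)
      = univ.filter (fun a => TStep E a b) := by
    ext a
    simp only [Finset.mem_filter, Finset.mem_erase, Finset.mem_univ, true_and, and_true]
    refine ⟨fun h => h.2, fun h => ⟨fun he => h.2.1 (by rw [he]), h⟩⟩
  have herase : ∑ a ∈ univ.erase b, treeWt x a * lapM (TStep E) (xT E x) a b
      = ∑ a ∈ univ.filter (fun a => TStep E a b), treeWt x a * x (a.root, b.root) := by
    refine (Finset.sum_congr rfl hoff).trans ?_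
    rw [← Finset.sum_filter, hfe]
  have hTa : ∀ a : SpTree E, TStep E a b → E b.root (a.out b.root) := fun a ha =>
    a.edge_mem b.root (Ne.symm ha.2.1)
  have hTa' : ∀ a : SpTree E, TStep E a b → a.out b.root ≠ b.root := fun a ha h =>
    hsimple b.root (by have := hTa a ha; rwa [h] at this)
  have hbij : ∑ a ∈ univ.filter (fun a => TStep E a b), treeWt x a * x (a.root, b.root)
      = ∑ c ∈ univ.filter (fun c => TStep E b c), treeWt x b * x (b.root, c.root) := by
    refine Finset.sum_bij'
      (fun a ha => pushTree b (a.out b.root)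
        (hTa a (Finset.mem_filter.mp ha).2) (hTa' a (Finset.mem_filter.mp ha).2))
      (fun c hc => pullTree b c.root
        (Finset.mem_filter.mp hc).2.1 (Ne.symm (Finset.mem_filter.mp hc).2.2.1))
      ?_ ?_ ?_ ?_ ?_
    · -- hi : pushTree ∈ filter (TStep E b ·)
      intro a ha
      have h := (Finset.mem_filter.mp ha).2
      refine Finset.mem_filter.mpr ⟨Finset.mem_univ _, ?_⟩
      refine ⟨hTa a h, Ne.symm (hTa' a h), pushOut_root b _, ?_⟩
      intro v h1 h2
      exact pushOut_other b _ h2 h1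
    · -- hj : pullTree ∈ filter (TStep E · b)
      intro c hc
      have h := (Finset.mem_filter.mp hc).2
      have hzw : c.root ≠ b.root := Ne.symm h.2.1
      refine Finset.mem_filter.mpr ⟨Finset.mem_univ _, ?_⟩
      refine ⟨?_, predV_ne_root b hzw, predV_out b hzw, ?_⟩
      · have := b.edge_mem (predV b c.root) (predV_ne_root b hzw)
        rwa [predV_out b hzw] at this
      · intro v h1 h2
        exact (pullOut_other b c.root h1 h2).symm
    · -- left inverse
      intro a ha
      have h := (Finset.mem_filter.mp ha).2
      have hzw := hTa' a h
      have hu : predV b (a.out b.root) = a.root := (root_eq_predV h hzw).symm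
      apply SpTree.ext'
      · exact hu
      · funext v
        show pullOut b (a.out b.root) v = a.out v
        rcases eq_or_ne v a.root with rfl | h1
        · have hps : pullOut b (a.out b.root) a.root = a.root := by
            rw [← hu]; exact pullOut_self b _
          rw [hps, a.out_root]
        rcases eq_or_ne v b.root with rfl | h2
        · rw [pullOut_root b hzw]
        · rw [pullOut_other b _ (hu ▸ h1) h2, h.2.2.2 v h1 h2]
    · -- right inverse
      intro c hc
      have h := (Finset.mem_filter.mp hc).2
      have hzw : c.root ≠ b.root := Ne.symm h.2.1
      have hz : (pullTree b c.root h.1 hzw).out b.root = c.root := pullOut_root b hzw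
      refine (pushTree_congr b hz _ _ h.1 hzw).trans ?_
      apply SpTree.ext'
      · rfl
      · funext v
        show pushOut b c.root v = c.out v
        rcases eq_or_ne v c.root with rfl | h1
        · rw [pushOut_self, c.out_root]
        rcases eq_or_ne v b.root with rfl | h2
        · rw [pushOut_root, h.2.2.1]
        · rw [pushOut_other b _ h1 h2, h.2.2.2 v h2 h1]
    · -- weights
      intro a ha
      exact step_wt x (Finset.mem_filter.mp ha).2
  rw [← Finset.add_sum_erase univ _ (mem_univ b), herase, hbij, hdiag, mul_neg,
    Finset.mul_sum, neg_add_cancel]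


end StationaryAux

/-- The row vector `(π_𝐚)_𝐚` is a left null vector of the lifted
Laplacian `𝒬` of the tree graph: for every oriented spanning tree `𝐛` of `G`,
`∑_𝐚 π_𝐚 · 𝒬_{𝐚𝐛} = 0`. -/
theorem statement6 {V : Type} [Fintype V] (E : V → V → Prop)
    (hsimple : ∀ v, ¬ E v v) (hsc : SConn E Set.univ) (b : SpTree E) :
    ∑ a : SpTree E, treeWt (xv (V := V)) a * lapM (TStep E) (xT E (xv (V := V))) a b
      = 0 :=
  key hsimple b (xv (V := V))
end

section
/- Let G = (V,E) be a finite simple strongly connected directed graph and fix a total ordering of V. For every vertex v ∈ V there is exactly one oriented spanning tree 𝐚 of G rooted at v such that ψ(𝐚) = V; in other words m(V,v) = 1 for every v ∈ V. -/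
open Classical Finset

/-!
Call *canonical* the run of the exploration in which an edge is accepted exactly when its
source is not yet explored, the accepted edge being recorded as the out-edge of its source.
In this run, an edge `(u, w)` with `u` unexplored and `w` explored is queued ahead of every
edge out of `w` (the list is FIFO), so it is never deleted. Hence, once the list is exhausted,
every vertex from which the root is reachable has been explored, and the recorded edges form
an oriented spanning tree `𝐚₀` with `φ(𝐚₀) = V`.

Conversely, a tree `𝐚` with `φ(𝐚) = V` makes the canonical decision at every step: an edge
whose source `u` is already explored differs from the out-edge of `u` in `𝐚` (inductively,
the one recorded for `u`), and rejecting an edge whose source is unexplored erases that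
source forever. So `𝐚` runs exactly like the canonical run, and `𝐚 = 𝐚₀`. Finally, by strong
connectivity, `ψ(𝐚) = V` if and only if `φ(𝐚) = V`.
-/

open Function

theorem Set.EqOn.iterate_of_mapsTo {α : Type*} {f g : α → α} {s : Set α} (h : Set.EqOn f g s)
    (hg : Set.MapsTo g s s) (n : ℕ) : Set.EqOn (f^[n]) (g^[n]) s := by
  induction n with
  | zero => exact fun _ _ => rfl
  | succ n ih =>
    intro x hx
    rw [iterate_succ_apply, iterate_succ_apply, h hx]
    exact ih (hg hx)

theorem mapsTo_update_insert {α : Type*} [DecidableEq α] {g : α → α} {A : Finset α} {z t : α}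
    (hg : Set.MapsTo g A A) (ht : t ∈ A) :
    Set.MapsTo (update g z t) (insert z A : Finset α) (insert z A : Finset α) := by
  intro w hw
  by_cases hwz : w = z
  · rw [hwz, update_self]
    exact Finset.mem_insert_of_mem ht
  · rw [update_of_ne hwz]
    exact Finset.mem_insert_of_mem (hg ((Finset.mem_insert.1 hw).resolve_left hwz))

theorem exists_iterate_update_eq {α : Type*} [DecidableEq α] {g : α → α} {A : Finset α}
    {z t v : α} (hz : z ∉ A) (ht : t ∈ A) (hg : Set.MapsTo g A A)
    (hreach : ∀ w ∈ A, ∃ n, g^[n] w = v) (w : α) (hw : w ∈ insert z A) :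
    ∃ n, (update g z t)^[n] w = v := by
  have hiter := Set.EqOn.iterate_of_mapsTo
    (fun x hx => update_of_ne (ne_of_mem_of_not_mem hx hz) t g) hg
  rcases Finset.mem_insert.1 hw with rfl | hw
  · obtain ⟨n, hn⟩ := hreach t ht
    exact ⟨n + 1, by rw [iterate_succ_apply, update_self, hiter n ht, hn]⟩
  · obtain ⟨n, hn⟩ := hreach w hw
    exact ⟨n, by rw [hiter n hw, hn]⟩

noncomputable section Exploration

variable {V : Type*} {ord : LinearOrder V}

def exploreStep (ord : LinearOrder V) (accept : V × V → Prop) (s : ExpState V) :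
    ExpState V :=
  match s.Lq with
  | [] => s
  | e :: rest =>
    if accept e then
      { A := insert e.1 s.A
        Lq := rest.filter (fun f => decide (f.1 ≠ e.1)) ++ sortedTo ord s.F e.1
        F := s.F
        Er := s.Er }
    else
      { A := s.A
        Lq := rest.filter (fun f => decide (f.1 ≠ e.1 ∧ f.2 ≠ e.1))
        F := s.F.filter (fun f => f.1 ≠ e.1 ∧ f.2 ≠ e.1)
        Er := insert e.1 s.Er }

theorem expStep_eq_exploreStep [Fintype V] {E : V → V → Prop} (ord : LinearOrder V)
    (a : SpTree E) : expStep ord a = exploreStep ord (inTree a) :=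
  rfl

theorem mem_sortedTo {S : Finset (V × V)} {w : V} {p : V × V} :
    p ∈ sortedTo ord S w ↔ p ∈ S ∧ p.2 = w := by
  obtain ⟨p₁, p₂⟩ := p
  simp only [sortedTo, List.mem_map, Finset.mem_sort, Finset.mem_image, Finset.mem_filter,
    Prod.mk.injEq]
  constructor
  · rintro ⟨u, ⟨⟨q₁, q₂⟩, ⟨hq, rfl⟩, rfl⟩, rfl, rfl⟩
    exact ⟨hq, rfl⟩
  · rintro ⟨hp, rfl⟩
    exact ⟨p₁, ⟨(p₁, p₂), ⟨hp, rfl⟩, rfl⟩, rfl, rfl⟩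

theorem length_sortedTo (S : Finset (V × V)) (w : V) :
    (sortedTo ord S w).length = #(S.filter fun f => f.2 = w) := by
  rw [sortedTo, List.length_map, Finset.length_sort, Finset.card_image_of_injOn]
  intro p hp q hq hpq
  rw [Finset.mem_coe, Finset.mem_filter] at hp hq
  exact Prod.ext hpq (hp.2.trans hq.2.symm)

section Step

variable {accept : V × V → Prop} {s : ExpState V} {e : V × V} {rest : List (V × V)}

theorem exploreStep_of_nil (h : s.Lq = []) : exploreStep ord accept s = s := by
  simp only [exploreStep, h]

theorem exploreStep_of_accept (h : s.Lq = e :: rest) (he : accept e) :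
    exploreStep ord accept s =
      { A := insert e.1 s.A
        Lq := rest.filter (fun f => decide (f.1 ≠ e.1)) ++ sortedTo ord s.F e.1
        F := s.F
        Er := s.Er } := by
  simp only [exploreStep, h, if_pos he]

theorem exploreStep_of_reject (h : s.Lq = e :: rest) (he : ¬ accept e) :
    exploreStep ord accept s =
      { A := s.A
        Lq := rest.filter (fun f => decide (f.1 ≠ e.1 ∧ f.2 ≠ e.1))
        F := s.F.filter (fun f => f.1 ≠ e.1 ∧ f.2 ≠ e.1)
        Er := insert e.1 s.Er } := by
  simp only [exploreStep, h, if_neg he]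

def IsDead (s : ExpState V) (w : V) : Prop :=
  (∀ t, (w, t) ∉ s.Lq) ∧ (∀ t, (w, t) ∉ s.F) ∧ w ∉ s.A

theorem isDead_exploreStep_of_reject (h : s.Lq = e :: rest) (he : ¬ accept e) (hA : e.1 ∉ s.A) :
    IsDead (exploreStep ord accept s) e.1 := by
  rw [exploreStep_of_reject h he]
  refine ⟨fun t ht => ?_, fun t ht => (Finset.mem_filter.1 ht).2.1 rfl, hA⟩
  simpa using (List.mem_filter.1 ht).2

theorem IsDead.exploreStep_iterate {w : V} (h : IsDead s w) (n : ℕ) :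
    IsDead ((exploreStep ord accept)^[n] s) w := by
  induction n generalizing s with
  | zero => exact h
  | succ n ih =>
    rw [iterate_succ_apply]
    apply ih
    obtain ⟨hLq, hF, hA⟩ := h
    rcases hs : s.Lq with _ | ⟨e, rest⟩
    · rw [exploreStep_of_nil hs]
      exact ⟨hLq, hF, hA⟩
    have hrest : ∀ t, (w, t) ∉ rest := fun t ht => hLq t (hs ▸ List.mem_cons_of_mem _ ht)
    have hwe : w ≠ e.1 := by
      rintro rfl
      exact hLq e.2 (hs ▸ List.mem_cons_self)
    by_cases he : accept e
    · rw [exploreStep_of_accept hs he]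
      refine ⟨fun t ht => ?_, hF, fun hw => (Finset.mem_insert.1 hw).elim hwe hA⟩
      rcases List.mem_append.1 ht with ht | ht
      · exact hrest t (List.mem_of_mem_filter ht)
      · exact hF t (mem_sortedTo.1 ht).1
    · rw [exploreStep_of_reject hs he]
      exact ⟨fun t ht => hrest t (List.mem_of_mem_filter ht),
        fun t ht => hF t (Finset.mem_of_mem_filter _ ht), hA⟩

end Step

def PendingIn (l : List (V × V)) (u w : V) : Prop :=
  ∃ l₁ l₂, l = l₁ ++ (u, w) :: l₂ ∧ ∀ f ∈ l₁, f.1 ≠ w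

namespace PendingIn

variable {l : List (V × V)} {u w : V}

theorem mem (h : PendingIn l u w) : (u, w) ∈ l := by
  obtain ⟨l₁, l₂, rfl, -⟩ := h
  exact List.mem_append_right _ List.mem_cons_self

theorem of_mem (hm : (u, w) ∈ l) (hl : ∀ f ∈ l, f.1 ≠ w) : PendingIn l u w := by
  obtain ⟨l₁, l₂, rfl⟩ := List.append_of_mem hm
  exact ⟨l₁, l₂, rfl, fun f hf => hl f (List.mem_append_left _ hf)⟩

theorem append (h : PendingIn l u w) (l' : List (V × V)) : PendingIn (l ++ l') u w := by
  obtain ⟨l₁, l₂, rfl, h₁⟩ := h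
  exact ⟨l₁, l₂ ++ l', by simp, h₁⟩

theorem filter (h : PendingIn l u w) {p : V × V → Bool} (hp : p (u, w)) :
    PendingIn (l.filter p) u w := by
  obtain ⟨l₁, l₂, rfl, h₁⟩ := h
  exact ⟨l₁.filter p, l₂.filter p, by simp [List.filter_append, hp],
    fun f hf => h₁ f (List.mem_of_mem_filter hf)⟩

theorem of_cons {e : V × V} (h : PendingIn (e :: l) u w) (he : e.1 ≠ u) :
    PendingIn l u w ∧ e.1 ≠ w := by
  obtain ⟨_ | ⟨f, l₁⟩, l₂, hl, h₁⟩ := h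
  · exact absurd (congrArg Prod.fst (List.cons.inj hl).1) he
  · obtain ⟨rfl, rfl⟩ := List.cons.inj hl
    exact ⟨⟨l₁, l₂, rfl, fun f hf => h₁ f (List.mem_cons_of_mem _ hf)⟩,
      h₁ _ List.mem_cons_self⟩

end PendingIn

/-- A state of the exploration together with the out-edges recorded so far. -/
structure CanonState (V : Type*) where
  s : ExpState V
  g : V → V

def canonStep (ord : LinearOrder V) (c : CanonState V) : CanonState V where
  s := exploreStep ord (fun e => e.1 ∉ c.s.A) c.s
  g := match c.s.Lq with
    | [] => c.g
    | e :: _ => if e.1 ∈ c.s.A then c.g else update c.g e.1 e.2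

section CanonStep

variable {c : CanonState V} {e : V × V} {rest : List (V × V)}

theorem canonStep_of_nil (h : c.s.Lq = []) : canonStep ord c = c := by
  obtain ⟨s, g⟩ := c
  simp_all only [canonStep, exploreStep_of_nil]

theorem canonStep_of_not_mem (h : c.s.Lq = e :: rest) (he : e.1 ∉ c.s.A) :
    canonStep ord c =
      ⟨{ A := insert e.1 c.s.A
         Lq := rest.filter (fun f => decide (f.1 ≠ e.1)) ++ sortedTo ord c.s.F e.1
         F := c.s.F
         Er := c.s.Er }, update c.g e.1 e.2⟩ := by
  simp only [canonStep, exploreStep_of_accept (accept := fun e => e.1 ∉ c.s.A) h he, h, if_neg he]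

theorem canonStep_of_mem (h : c.s.Lq = e :: rest) (he : e.1 ∈ c.s.A) :
    canonStep ord c =
      ⟨{ A := c.s.A
         Lq := rest.filter (fun f => decide (f.1 ≠ e.1 ∧ f.2 ≠ e.1))
         F := c.s.F.filter (fun f => f.1 ≠ e.1 ∧ f.2 ≠ e.1)
         Er := insert e.1 c.s.Er }, c.g⟩ := by
  simp only [canonStep, exploreStep_of_reject (accept := fun e => e.1 ∉ c.s.A) h (not_not.2 he),
    h, if_pos he]

end CanonStep

structure CanonState.Good (E : V → V → Prop) (v : V) (c : CanonState V) : Prop where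
  root_mem : v ∈ c.s.A
  lq_edge : ∀ p ∈ c.s.Lq, E p.1 p.2 ∧ p.2 ∈ c.s.A
  lq_ne_g : ∀ p ∈ c.s.Lq, p.1 ∈ c.s.A → p.2 ≠ c.g p.1
  f_edge : ∀ p ∈ c.s.F, E p.1 p.2
  mem_f : ∀ u w, E u w → u ∉ c.s.A → w ∉ c.s.A → (u, w) ∈ c.s.F
  pending : ∀ u w, E u w → u ∉ c.s.A → w ∈ c.s.A → PendingIn c.s.Lq u w
  g_root : c.g v = v
  g_mapsTo : Set.MapsTo c.g c.s.A c.s.A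
  g_edge : ∀ w ∈ c.s.A, w ≠ v → E w (c.g w)
  g_reach : ∀ w ∈ c.s.A, ∃ n, c.g^[n] w = v

namespace CanonState.Good

variable {E : V → V → Prop} {v : V} {c : CanonState V} {e : V × V} {rest : List (V × V)}

theorem step_of_mem (hc : c.Good E v) (h : c.s.Lq = e :: rest) (he : e.1 ∈ c.s.A) :
    (canonStep ord c).Good E v := by
  have hrest : ∀ p ∈ rest, p ∈ c.s.Lq := fun p hp => h ▸ List.mem_cons_of_mem _ hp
  rw [_root_.canonStep_of_mem h he]
  constructor
  all_goals dsimp only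
  case lq_edge => exact fun p hp => hc.lq_edge p (hrest p (List.mem_of_mem_filter hp))
  case lq_ne_g => exact fun p hp => hc.lq_ne_g p (hrest p (List.mem_of_mem_filter hp))
  case f_edge => exact fun p hp => hc.f_edge p (Finset.mem_of_mem_filter p hp)
  case mem_f =>
    exact fun u w huw hu hw => Finset.mem_filter.2 ⟨hc.mem_f u w huw hu hw,
      (ne_of_mem_of_not_mem he hu).symm, (ne_of_mem_of_not_mem he hw).symm⟩
  case pending =>
    intro u w huw hu hw
    have hue : e.1 ≠ u := ne_of_mem_of_not_mem he hu
    obtain ⟨hp, hwe⟩ := (h ▸ hc.pending u w huw hu hw).of_cons hue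
    exact hp.filter (by simp [hue.symm, hwe.symm])
  case root_mem => exact hc.root_mem
  case g_root => exact hc.g_root
  case g_mapsTo => exact hc.g_mapsTo
  case g_edge => exact hc.g_edge
  case g_reach => exact hc.g_reach

theorem fst_ne_of_mem_sortedTo (hs : ∀ x, ¬ E x x) (hc : c.Good E v) {p : V × V} {w : V}
    (hp : p ∈ sortedTo ord c.s.F w) : p.1 ≠ w := by
  obtain ⟨hpF, rfl⟩ := mem_sortedTo.1 hp
  intro h
  have hE := hc.f_edge p hpF
  rw [h] at hE
  exact hs _ hE

theorem pendingIn_of_not_mem (hs : ∀ x, ¬ E x x) (hc : c.Good E v) (h : c.s.Lq = e :: rest)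
    (he : e.1 ∉ c.s.A) {u w : V} (huw : E u w) (hu : u ∉ insert e.1 c.s.A)
    (hw : w ∈ insert e.1 c.s.A) :
    PendingIn (rest.filter (fun f => decide (f.1 ≠ e.1)) ++ sortedTo ord c.s.F e.1) u w := by
  have hu' : u ∉ c.s.A := fun h => hu (Finset.mem_insert_of_mem h)
  have hue : e.1 ≠ u := fun h => hu (h ▸ Finset.mem_insert_self _ _)
  rcases Finset.mem_insert.1 hw with rfl | hw
  · refine PendingIn.of_mem (List.mem_append_right _ ?_) fun f hf => ?_
    · exact mem_sortedTo.2 ⟨hc.mem_f u _ huw hu' he, rfl⟩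
    rcases List.mem_append.1 hf with hf | hf
    · simpa using (List.mem_filter.1 hf).2
    · exact hc.fst_ne_of_mem_sortedTo hs hf
  · obtain ⟨hp, -⟩ := (h ▸ hc.pending u w huw hu' hw).of_cons hue
    exact (hp.filter (by simpa using hue.symm)).append _

theorem step_of_not_mem (hs : ∀ x, ¬ E x x) (hc : c.Good E v) (h : c.s.Lq = e :: rest)
    (he : e.1 ∉ c.s.A) : (canonStep ord c).Good E v := by
  have hrest : ∀ p ∈ rest, p ∈ c.s.Lq := fun p hp => h ▸ List.mem_cons_of_mem _ hp
  obtain ⟨he_edge, he₂⟩ := hc.lq_edge e (h ▸ List.mem_cons_self)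
  have hg : Set.EqOn (update c.g e.1 e.2) c.g c.s.A := fun w hw =>
    update_of_ne (ne_of_mem_of_not_mem hw he) _ _
  rw [_root_.canonStep_of_not_mem h he]
  constructor
  all_goals dsimp only
  case root_mem => exact Finset.mem_insert_of_mem hc.root_mem
  case lq_edge =>
    intro p hp
    rcases List.mem_append.1 hp with hp | hp
    · obtain ⟨hE, hp₂⟩ := hc.lq_edge p (hrest p (List.mem_of_mem_filter hp))
      exact ⟨hE, Finset.mem_insert_of_mem hp₂⟩
    · obtain ⟨hpF, hp₂⟩ := mem_sortedTo.1 hp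
      exact ⟨hc.f_edge p hpF, hp₂ ▸ Finset.mem_insert_self _ _⟩
  case lq_ne_g =>
    intro p hp hpA
    rcases List.mem_append.1 hp with hp | hp
    · obtain ⟨hp, hp₁⟩ := List.mem_filter.1 hp
      have hpA := (Finset.mem_insert.1 hpA).resolve_left (by simpa using hp₁)
      rw [hg hpA]
      exact hc.lq_ne_g p (hrest p hp) hpA
    · have hpA := (Finset.mem_insert.1 hpA).resolve_left (hc.fst_ne_of_mem_sortedTo hs hp)
      rw [hg hpA, (mem_sortedTo.1 hp).2]
      exact (ne_of_mem_of_not_mem (hc.g_mapsTo hpA) he).symm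
  case f_edge => exact hc.f_edge
  case mem_f =>
    exact fun u w huw hu hw => hc.mem_f u w huw (fun h => hu (Finset.mem_insert_of_mem h))
      (fun h => hw (Finset.mem_insert_of_mem h))
  case pending => exact fun u w huw => hc.pendingIn_of_not_mem hs h he huw
  case g_root => exact hg hc.root_mem ▸ hc.g_root
  case g_mapsTo => exact mapsTo_update_insert hc.g_mapsTo he₂
  case g_edge =>
    intro w hw hwv
    rcases Finset.mem_insert.1 hw with rfl | hw
    · rwa [update_self]
    · rw [hg hw]
      exact hc.g_edge w hw hwv
  case g_reach => exact exists_iterate_update_eq he he₂ hc.g_mapsTo hc.g_reach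

theorem step (hs : ∀ x, ¬ E x x) (hc : c.Good E v) : (canonStep ord c).Good E v := by
  rcases h : c.s.Lq with _ | ⟨e, rest⟩
  · rwa [canonStep_of_nil h]
  by_cases he : e.1 ∈ c.s.A
  · exact hc.step_of_mem h he
  · exact hc.step_of_not_mem hs h he

end CanonState.Good

theorem canonStep_mono (c : CanonState V) :
    c.s.A ⊆ (canonStep ord c).s.A ∧ Set.EqOn (canonStep ord c).g c.g c.s.A := by
  rcases h : c.s.Lq with _ | ⟨e, rest⟩
  · rw [canonStep_of_nil h]
    exact ⟨subset_rfl, Set.eqOn_refl _ _⟩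
  by_cases he : e.1 ∈ c.s.A
  · rw [canonStep_of_mem h he]
    exact ⟨subset_rfl, Set.eqOn_refl _ _⟩
  · rw [canonStep_of_not_mem h he]
    exact ⟨Finset.subset_insert _ _, fun w hw => update_of_ne (ne_of_mem_of_not_mem hw he) _ _⟩

/-- Accepting `e` appends the edges of `F` with target `e.1`, which then leave the second
summand. -/
def potential [DecidableEq V] (c : CanonState V) : ℕ :=
  c.s.Lq.length + #(c.s.F.filter fun f => f.2 ∉ c.s.A)

theorem potential_canonStep_lt {c : CanonState V} (hc : c.s.Lq ≠ []) :
    potential (canonStep ord c) < potential c := by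
  obtain ⟨e, rest, h⟩ := List.exists_cons_of_ne_nil hc
  by_cases he : e.1 ∈ c.s.A
  · rw [canonStep_of_mem h he, potential, potential, h]
    have hF : #((c.s.F.filter fun f => f.1 ≠ e.1 ∧ f.2 ≠ e.1).filter fun f => f.2 ∉ c.s.A) ≤
        #(c.s.F.filter fun f => f.2 ∉ c.s.A) :=
      Finset.card_le_card (Finset.filter_subset_filter _ (Finset.filter_subset _ _))
    have hrest := List.length_filter_le (fun f : V × V => decide (f.1 ≠ e.1 ∧ f.2 ≠ e.1)) rest
    simp only [List.length_cons]
    omega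
  · rw [canonStep_of_not_mem h he, potential, potential, h, List.length_append, length_sortedTo]
    have hrest := List.length_filter_le (fun f : V × V => decide (f.1 ≠ e.1)) rest
    have hdisj : Disjoint (c.s.F.filter fun f => f.2 ∉ insert e.1 c.s.A)
        (c.s.F.filter fun f => f.2 = e.1) :=
      Finset.disjoint_filter.2 fun f _ h₁ h₂ => h₁ (h₂ ▸ Finset.mem_insert_self _ _)
    have hsub : (c.s.F.filter fun f => f.2 ∉ insert e.1 c.s.A) ∪
        (c.s.F.filter fun f => f.2 = e.1) ⊆ c.s.F.filter fun f => f.2 ∉ c.s.A := by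
      intro f
      simp only [Finset.mem_union, Finset.mem_filter, Finset.mem_insert, not_or]
      rintro (⟨hf, -, hfA⟩ | ⟨hf, hf₂⟩)
      · exact ⟨hf, hfA⟩
      · exact ⟨hf, hf₂ ▸ he⟩
    have hF := Finset.card_union_of_disjoint hdisj ▸ Finset.card_le_card hsub
    simp only [List.length_cons]
    omega

theorem canonStep_iterate_lq_eq_nil {m : ℕ} {c : CanonState V} (hm : potential c ≤ m) :
    ((canonStep ord)^[m] c).s.Lq = [] := by
  induction m generalizing c with
  | zero => exact List.length_eq_zero_iff.1 (by rw [potential] at hm; omega : c.s.Lq.length = 0)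
  | succ m ih =>
    by_cases h : c.s.Lq = []
    · rw [iterate_fixed (canonStep_of_nil h)]
      exact h
    · rw [iterate_succ_apply]
      exact ih (by have := potential_canonStep_lt (ord := ord) h; omega)

section Canonical

variable [Fintype V] {E : V → V → Prop} {v : V}

def canonInit (ord : LinearOrder V) (E : V → V → Prop) (v : V) : CanonState V :=
  letI := ord
  ⟨{ A := {v}
     Lq := ((univ.filter (fun u => E u v)).sort (· ≤ ·)).map fun u => (u, v)
     F := univ.filter fun f : V × V => E f.1 f.2 ∧ f.1 ≠ v
     Er := (∅ : Finset V) }, id⟩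

def canonRun (ord : LinearOrder V) (E : V → V → Prop) (v : V) (k : ℕ) : CanonState V :=
  (canonStep ord)^[k] (canonInit ord E v)

def runLength (V : Type*) [Fintype V] : ℕ :=
  2 * Fintype.card (V × V) + 1

theorem expRun_eq_iterate (a : SpTree E) :
    expRun ord a = (expStep ord a)^[runLength V] (expInit ord a) :=
  rfl

theorem expInit_eq_canonInit {a : SpTree E} (hroot : a.root = v) :
    expInit ord a = (canonInit ord E v).s := by
  subst hroot
  rfl

theorem mem_canonInit_lq {p : V × V} : p ∈ (canonInit ord E v).s.Lq ↔ E p.1 v ∧ p.2 = v := by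
  obtain ⟨u, w⟩ := p
  simp [canonInit, eq_comm]

theorem canonInit_good (hs : ∀ x, ¬ E x x) : (canonInit ord E v).Good E v where
  root_mem := Finset.mem_singleton_self v
  lq_edge p hp := by
    obtain ⟨hE, hp₂⟩ := mem_canonInit_lq.1 hp
    exact ⟨hp₂ ▸ hE, hp₂ ▸ Finset.mem_singleton_self v⟩
  lq_ne_g p hp hpA := absurd (Finset.mem_singleton.1 hpA ▸ (mem_canonInit_lq.1 hp).1) (hs v)
  f_edge p hp := (Finset.mem_filter.1 hp).2.1
  mem_f u w huw hu _ :=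
    Finset.mem_filter.2 ⟨Finset.mem_univ _, huw, fun h => hu (h ▸ Finset.mem_singleton_self v)⟩
  pending u w huw _ hw := by
    obtain rfl := Finset.mem_singleton.1 hw
    exact PendingIn.of_mem (mem_canonInit_lq.2 ⟨huw, rfl⟩)
      fun f hf hfw => hs w (hfw ▸ (mem_canonInit_lq.1 hf).1)
  g_root := rfl
  g_mapsTo := Set.mapsTo_id _
  g_edge w hw hwv := absurd (Finset.mem_singleton.1 hw) hwv
  g_reach w hw := ⟨0, Finset.mem_singleton.1 hw⟩

theorem canonRun_succ (k : ℕ) :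
    canonRun ord E v (k + 1) = canonStep ord (canonRun ord E v k) :=
  iterate_succ_apply' _ _ _

theorem canonRun_good (hs : ∀ x, ¬ E x x) (k : ℕ) : (canonRun ord E v k).Good E v := by
  induction k with
  | zero => exact canonInit_good hs
  | succ k ih =>
    rw [canonRun_succ]
    exact ih.step hs

theorem canonRun_mono {k m : ℕ} (hkm : k ≤ m) :
    (canonRun ord E v k).s.A ⊆ (canonRun ord E v m).s.A ∧
      Set.EqOn (canonRun ord E v m).g (canonRun ord E v k).g (canonRun ord E v k).s.A := by
  induction m, hkm using Nat.le_induction with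
  | base => exact ⟨subset_rfl, Set.eqOn_refl _ _⟩
  | succ m _ ih =>
    obtain ⟨hA, hg⟩ := canonStep_mono (ord := ord) (canonRun ord E v m)
    rw [canonRun_succ]
    exact ⟨ih.1.trans hA, fun w hw => (hg (ih.1 hw)).trans (ih.2 hw)⟩

theorem canonRun_lq_eq_nil : (canonRun ord E v (runLength V)).s.Lq = [] := by
  apply canonStep_iterate_lq_eq_nil
  have hLq : (canonInit ord E v).s.Lq.length ≤ Fintype.card V := by
    simp only [canonInit, List.length_map, Finset.length_sort]
    exact Finset.card_le_univ _
  have hV : Fintype.card V ≤ Fintype.card (V × V) := by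
    rw [Fintype.card_prod]
    exact Nat.le_mul_self _
  have hF := Finset.card_le_univ
    ((canonInit ord E v).s.F.filter fun f => f.2 ∉ (canonInit ord E v).s.A)
  rw [potential, runLength]
  omega

theorem canonRun_A_eq_univ (hs : ∀ x, ¬ E x x) (hreach : ∀ u, Relation.ReflTransGen E u v) :
    (canonRun ord E v (runLength V)).s.A = univ := by
  have hc := canonRun_good (ord := ord) (v := v) hs (runLength V)
  have hnil := canonRun_lq_eq_nil (ord := ord) (E := E) (v := v)
  refine Finset.eq_univ_iff_forall.2 fun u => ?_
  induction hreach u using Relation.ReflTransGen.head_induction_on with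
  | refl => exact hc.root_mem
  | head hxy _ ih =>
    by_contra hx
    exact List.not_mem_nil (hnil ▸ (hc.pending _ _ hxy hx ih).mem)

def canonTree (ord : LinearOrder V) (hs : ∀ x, ¬ E x x)
    (hreach : ∀ u, Relation.ReflTransGen E u v) : SpTree E where
  root := v
  out := (canonRun ord E v (runLength V)).g
  out_root := (canonRun_good hs _).g_root
  edge_mem w := (canonRun_good hs _).g_edge w (canonRun_A_eq_univ hs hreach ▸ Finset.mem_univ w)
  reach w := (canonRun_good hs _).g_reach w (canonRun_A_eq_univ hs hreach ▸ Finset.mem_univ w)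

def Agrees (a : SpTree E) (c : CanonState V) : Prop :=
  ∀ w ∈ c.s.A, w ≠ a.root → a.out w = c.g w

theorem expStep_eq_canonStep {a : SpTree E} {c : CanonState V} (hc : c.Good E v)
    (hag : Agrees a c) (hacc : ∀ e rest, c.s.Lq = e :: rest → e.1 ∉ c.s.A → inTree a e) :
    expStep ord a c.s = (canonStep ord c).s ∧ Agrees a (canonStep ord c) := by
  rw [expStep_eq_exploreStep]
  rcases h : c.s.Lq with _ | ⟨e, rest⟩
  · rw [canonStep_of_nil h, exploreStep_of_nil h]
    exact ⟨rfl, hag⟩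
  by_cases he : e.1 ∈ c.s.A
  · -- `e` is not the recorded out-edge of its explored source, so `a` rejects it
    have ht : ¬ inTree a e := fun ht =>
      hc.lq_ne_g e (h ▸ List.mem_cons_self) he ((hag e.1 he ht.1).symm.trans ht.2).symm
    rw [canonStep_of_mem h he, exploreStep_of_reject h ht]
    exact ⟨rfl, hag⟩
  · have ht := hacc e rest h he
    rw [canonStep_of_not_mem h he, exploreStep_of_accept h ht]
    refine ⟨rfl, fun w hw hwr => ?_⟩
    dsimp only at hw ⊢
    rcases Finset.mem_insert.1 hw with rfl | hw
    · rw [update_self]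
      exact ht.2
    · rw [update_of_ne (ne_of_mem_of_not_mem hw he)]
      exact hag w hw hwr

theorem expStep_iterate_eq_canonRun (hs : ∀ x, ¬ E x x) (a : SpTree E) (hroot : a.root = v)
    (hacc : ∀ k < runLength V, (expStep ord a)^[k] (expInit ord a) = (canonRun ord E v k).s →
      ∀ e rest, (canonRun ord E v k).s.Lq = e :: rest → e.1 ∉ (canonRun ord E v k).s.A →
        inTree a e) :
    ∀ k ≤ runLength V, (expStep ord a)^[k] (expInit ord a) = (canonRun ord E v k).s ∧
      Agrees a (canonRun ord E v k) := by
  intro k hk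
  induction k with
  | zero =>
    refine ⟨expInit_eq_canonInit hroot, fun w hw hwr => absurd ?_ hwr⟩
    exact hroot ▸ Finset.mem_singleton.1 hw
  | succ k ih =>
    obtain ⟨hrun, hag⟩ := ih (by omega)
    rw [iterate_succ_apply', hrun, canonRun_succ]
    exact expStep_eq_canonStep (canonRun_good hs k) hag (hacc k (by omega) hrun)

theorem expPhi_canonTree (hs : ∀ x, ¬ E x x) (hreach : ∀ u, Relation.ReflTransGen E u v) :
    expPhi ord (canonTree ord hs hreach) = univ := by
  rw [expPhi, expRun_eq_iterate,
    (expStep_iterate_eq_canonRun (v := v) hs _ rfl ?_ _ le_rfl).1, canonRun_A_eq_univ hs hreach]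
  intro k hk _ e rest h he
  have hstep := canonStep_of_not_mem (ord := ord) h he
  have hmem : e.1 ∈ (canonRun ord E v (k + 1)).s.A := by
    rw [canonRun_succ, hstep]
    exact Finset.mem_insert_self _ _
  refine ⟨(ne_of_mem_of_not_mem (canonRun_good hs k).root_mem he).symm, ?_⟩
  change (canonRun ord E v (runLength V)).g e.1 = e.2
  rw [(canonRun_mono hk).2 hmem, canonRun_succ, hstep]
  exact update_self _ _ _

theorem eq_canonTree_of_expPhi_eq_univ (hs : ∀ x, ¬ E x x)
    (hreach : ∀ u, Relation.ReflTransGen E u v) (a : SpTree E) (hroot : a.root = v)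
    (hphi : expPhi ord a = univ) : a = canonTree ord hs hreach := by
  -- rejecting an edge whose source is unexplored would leave that source out of `φ(a)`
  have hacc : ∀ k < runLength V, (expStep ord a)^[k] (expInit ord a) = (canonRun ord E v k).s →
      ∀ e rest, (canonRun ord E v k).s.Lq = e :: rest → e.1 ∉ (canonRun ord E v k).s.A →
        inTree a e := by
    intro k hk hrun e rest h he
    by_contra ht
    have hdead := (isDead_exploreStep_of_reject (ord := ord) h ht he).exploreStep_iterate
      (ord := ord) (accept := inTree a) (runLength V - (k + 1))
    have hN : runLength V = (runLength V - (k + 1)) + (k + 1) := by omega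
    rw [expPhi, expRun_eq_iterate, hN, iterate_add_apply, iterate_succ_apply', hrun,
      expStep_eq_exploreStep] at hphi
    exact hdead.2.2 (hphi ▸ Finset.mem_univ e.1)
  obtain ⟨-, hag⟩ := expStep_iterate_eq_canonRun hs a hroot hacc _ le_rfl
  refine SpTree.ext' hroot (funext fun w => ?_)
  by_cases hw : w = v
  · subst hw
    exact hroot ▸ a.out_root |>.trans (canonTree ord hs hreach).out_root.symm
  · exact hag w (canonRun_A_eq_univ hs hreach ▸ Finset.mem_univ w) (hroot ▸ hw)

theorem expPsi_eq_univ_iff (hsc : SConn E Set.univ) (a : SpTree E) :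
    expPsi ord a = univ ↔ expPhi ord a = univ := by
  refine ⟨fun h => Finset.eq_univ_iff_forall.2 fun u =>
    (Finset.mem_filter.1 (h ▸ Finset.mem_univ u)).2.1, fun h => ?_⟩
  have hpath (x y : V) :
      Relation.ReflTransGen (fun p q => E p q ∧ p ∈ expPhi ord a ∧ q ∈ expPhi ord a) x y :=
    Relation.ReflTransGen.mono
      (fun p q hpq => ⟨hpq.1, h ▸ Finset.mem_univ p, h ▸ Finset.mem_univ q⟩) _ _
      (hsc x trivial y trivial)
  exact Finset.eq_univ_iff_forall.2 fun u =>
    Finset.mem_filter.2 ⟨Finset.mem_univ u, h ▸ Finset.mem_univ u, hpath _ _, hpath _ _⟩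

end Canonical

end Exploration

/-- For every vertex `v` of a finite simple strongly connected
digraph `G` (with a fixed total ordering of the vertices), there is exactly one
oriented spanning tree `𝐚` of `G` rooted at `v` with `ψ(𝐚) = V`, i.e.
`m(V, v) = 1`. -/
theorem statement8 {V : Type} [Fintype V] (E : V → V → Prop) (ord : LinearOrder V)
    (hsimple : ∀ v, ¬ E v v) (hsc : SConn E Set.univ) (v : V) :
    multCount E ord univ v = 1 := by
  have hreach (u : V) : Relation.ReflTransGen E u v :=
    Relation.ReflTransGen.mono (fun _ _ h => h.1) _ _ (hsc u trivial v trivial)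
  rw [multCount, Nat.card_eq_one_iff_exists]
  refine ⟨⟨canonTree ord hsimple hreach, rfl,
    (expPsi_eq_univ_iff hsc _).2 (expPhi_canonTree hsimple hreach)⟩, ?_⟩
  rintro ⟨a, hroot, hpsi⟩
  exact Subtype.ext <| eq_canonTree_of_expPhi_eq_univ hsimple hreach a hroot
    ((expPsi_eq_univ_iff hsc a).1 hpsi)
end

section
/- Let G = (V,E) be a finite simple strongly connected directed graph and let W ⊊ V be a proper strongly connected subset. Then det(L_W) is irreducible as a polynomial in the polynomial ring ℂ[x_e (e ∈ E), y_v (v ∈ W)]. -/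
open Classical Finset

/-!
Over `ℂ[x]`, `D = det L_W` is multi-affine in the variables `y_v` (`v ∈ W`): it equals
`∑_{R ⊆ W} det Q_R · ∏_{v ∈ W \ R} y_v`, with coefficient `1` on `∏_{v ∈ W} y_v`. If `D = P Q`
with no unit factor, each `y_v` occurs in exactly one factor and both factors contain some `y_v`,
so the variables split `W = S ⊔ T` with `S, T` nonempty, and comparing coefficients gives
`det Q_{R ∩ S} · det Q_{R ∩ T} = det Q_R` for every `R ⊆ W`. Strong connectivity of `W` gives an
edge from `S` to `T` lying on a closed walk in `W`; choose `R` and a successor map `nxt` on `R`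
along it and give weight `1` to the edges `v → nxt v`, `0` to all others. Then the rows of `Q_R`
sum to zero, so `det Q_R = 0`, whereas every orbit of `nxt` leaves `R ∩ S` and `R ∩ T`, which
forces `Q_{R ∩ S}` and `Q_{R ∩ T}` to be nonsingular.
-/

namespace Matrix

variable {ι A : Type*} [Fintype ι] [DecidableEq ι] [CommRing A]

theorem det_add_diagonal (N : Matrix ι ι A) (d : ι → A) :
    (N + diagonal d).det =
      ∑ s : Finset ι, (∏ i ∈ sᶜ, d i) * (N.submatrix (↑) (↑) : Matrix s s A).det := by
  have hrows : N + diagonal d = of (N.row + fun i => d i • (1 : Matrix ι ι A).row i) := by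
    ext i j
    by_cases h : i = j <;> simp [h]
  have hscale (s : Finset ι) : s.piecewise N.row (fun i => d i • (1 : Matrix ι ι A).row i) =
      fun i => (if i ∈ s then 1 else d i) • s.piecewise N.row (1 : Matrix ι ι A).row i := by
    ext i : 1
    by_cases h : i ∈ s <;> simp [h]
  rw [hrows]
  change detRowAlternating (N.row + fun i => d i • (1 : Matrix ι ι A).row i) = _
  rw [AlternatingMap.map_add_univ]
  refine Finset.sum_congr rfl fun s _ => ?_
  rw [hscale, AlternatingMap.map_smul_univ, ← det_piecewise_one_eq_submatrix_det, smul_eq_mul]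
  congr 1
  simp [Finset.prod_ite, Finset.filter_not, Finset.compl_eq_univ_sdiff]

end Matrix

namespace MvPolynomial

variable {σ τ R : Type*}

theorem vars_mul_eq [CommSemiring R] [NoZeroDivisors R] [DecidableEq σ] {p q : MvPolynomial σ R}
    (hp : p ≠ 0) (hq : q ≠ 0) : (p * q).vars = p.vars ∪ q.vars := by
  simp [vars_def, degrees_mul_eq hp hq, Multiset.toFinset_add]

theorem irreducible_rename [CommRing R] [IsDomain R] {f : σ → τ} (hf : Function.Injective f)
    {p : MvPolynomial σ R} (hp : Irreducible p) : Irreducible (rename f p) := by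
  classical
  refine ⟨fun hu => hp.not_isUnit (killCompl_rename_app hf p ▸ hu.map (killCompl hf)), ?_⟩
  intro P Q hPQ
  have hP : P ≠ 0 := by rintro rfl; exact hp.ne_zero (rename_injective f hf (by simpa using hPQ))
  have hQ : Q ≠ 0 := by rintro rfl; exact hp.ne_zero (rename_injective f hf (by simpa using hPQ))
  have hrange : ∀ F : MvPolynomial τ R, F.vars ⊆ (P * Q).vars → ↑F.vars ⊆ Set.range f := by
    intro F hF i hi
    obtain ⟨j, -, rfl⟩ := Finset.mem_image.1 (vars_rename f p (hPQ ▸ hF hi))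
    exact ⟨j, rfl⟩
  rw [vars_mul_eq hP hQ] at hrange
  obtain ⟨P', rfl⟩ := exists_rename_eq_of_vars_subset_range P f hf
    (hrange P Finset.subset_union_left)
  obtain ⟨Q', rfl⟩ := exists_rename_eq_of_vars_subset_range Q f hf
    (hrange Q Finset.subset_union_right)
  rw [← map_mul] at hPQ
  exact (hp.isUnit_or_isUnit (rename_injective f hf hPQ)).imp (·.map _) (·.map _)

theorem coeff_add_mul_of_vars_subset [CommSemiring R] {P Q : MvPolynomial σ R} {S : Set σ}
    (hP : ↑P.vars ⊆ S) (hQ : Disjoint (↑Q.vars : Set σ) S) {m n : σ →₀ ℕ}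
    (hm : ↑m.support ⊆ S) (hn : Disjoint (↑n.support : Set σ) S) :
    coeff (m + n) (P * Q) = coeff m P * coeff n Q := by
  classical
  rw [coeff_mul]
  refine Finset.sum_eq_single_of_mem (m, n) (Finset.HasAntidiagonal.mem_antidiagonal.2 rfl) ?_
  rintro ⟨a, b⟩ hab hne
  by_contra hc
  have ha : ∀ i ∈ a.support, i ∈ S := fun i hi =>
    hP ((mem_vars_iff_mem_support i).2 ⟨a, mem_support_iff.2 (left_ne_zero_of_mul hc), hi⟩)
  have hb : ∀ i ∈ b.support, i ∉ S := fun i hi =>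
    hQ.notMem_of_mem_left
      ((mem_vars_iff_mem_support i).2 ⟨b, mem_support_iff.2 (right_ne_zero_of_mul hc), hi⟩)
  have hsum (i : σ) : a i + b i = m i + n i :=
    DFunLike.congr_fun (Finset.HasAntidiagonal.mem_antidiagonal.1 hab) i
  have hS (i : σ) (hi : i ∈ S) : b i = 0 ∧ n i = 0 :=
    ⟨by_contra fun h => hb i (Finsupp.mem_support_iff.2 h) hi,
      by_contra fun h => hn.notMem_of_mem_left (Finsupp.mem_support_iff.2 h) hi⟩
  have hS' (i : σ) (hi : i ∉ S) : a i = 0 ∧ m i = 0 :=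
    ⟨by_contra fun h => hi (ha i (Finsupp.mem_support_iff.2 h)),
      by_contra fun h => hi (hm (Finsupp.mem_support_iff.2 h))⟩
  apply hne
  ext i <;> by_cases hi : i ∈ S <;> grind

end MvPolynomial

section MvCharpoly

open MvPolynomial

variable {ι A : Type*} [DecidableEq ι] [CommRing A]

def principalMinor (N : Matrix ι ι A) (s : Finset ι) : A :=
  (N.submatrix (↑) (↑) : Matrix s s A).det

noncomputable def sqfreeExp (u : Finset ι) : ι →₀ ℕ :=
  ∑ i ∈ u, Finsupp.single i 1

theorem sqfreeExp_apply (u : Finset ι) (i : ι) : sqfreeExp u i = if i ∈ u then 1 else 0 := by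
  simp [sqfreeExp, Finsupp.finsetSum_apply, Finsupp.single_apply]

theorem support_sqfreeExp (u : Finset ι) : (sqfreeExp u).support = u := by
  ext i
  simp [sqfreeExp_apply]

theorem sqfreeExp_injective : Function.Injective (sqfreeExp (ι := ι)) := by
  intro u v h
  ext i
  have hi := DFunLike.congr_fun h i
  simp only [sqfreeExp_apply] at hi
  split_ifs at hi <;> simp_all

theorem sqfreeExp_eq_inter_add_sdiff (u S : Finset ι) :
    sqfreeExp u = sqfreeExp (u ∩ S) + sqfreeExp (u \ S) := by
  ext i
  by_cases hu : i ∈ u <;> by_cases hS : i ∈ S <;> simp [sqfreeExp_apply, hu, hS]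

theorem principalMinor_empty (N : Matrix ι ι A) : principalMinor N ∅ = 1 :=
  Matrix.det_isEmpty

variable [Fintype ι]

/-- `det (N + diag y)`: unlike `Matrix.charpoly`, the variables enter with a plus sign. -/
noncomputable def mvCharpoly (N : Matrix ι ι A) : MvPolynomial ι A :=
  (N.map C + Matrix.diagonal X).det

theorem mvCharpoly_eq_sum (N : Matrix ι ι A) :
    mvCharpoly N = ∑ s : Finset ι, monomial (sqfreeExp sᶜ) (principalMinor N s) := by
  rw [mvCharpoly, Matrix.det_add_diagonal]
  refine Finset.sum_congr rfl fun s _ => ?_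
  have hX : ∏ i ∈ sᶜ, (X i : MvPolynomial ι A) = monomial (sqfreeExp sᶜ) 1 := by
    rw [sqfreeExp, monomial_sum_one]
    rfl
  have hC : ((N.map C).submatrix (↑) (↑) : Matrix s s (MvPolynomial ι A)).det =
      C (principalMinor N s) := by
    rw [principalMinor, RingHom.map_det, RingHom.mapMatrix_apply, Matrix.submatrix_map]
  rw [hC, hX, mul_comm, C_mul_monomial, mul_one]

variable (N : Matrix ι ι A)

theorem coeff_mvCharpoly (s : Finset ι) :
    coeff (sqfreeExp sᶜ) (mvCharpoly N) = principalMinor N s := by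
  rw [mvCharpoly_eq_sum, coeff_sum, Finset.sum_eq_single s]
  · rw [coeff_monomial, if_pos rfl]
  · intro t _ hts
    rw [coeff_monomial, if_neg (fun h => hts (compl_injective (sqfreeExp_injective h)))]
  · exact fun h => absurd (Finset.mem_univ s) h

theorem degreeOf_mvCharpoly_le (i : ι) : degreeOf i (mvCharpoly N) ≤ 1 := by
  rw [degreeOf_le_iff, mvCharpoly_eq_sum]
  intro m hm
  obtain ⟨s, -, hs⟩ := Finset.mem_biUnion.1 (support_sum hm)
  rw [Finset.mem_singleton.1 (support_monomial_subset hs), sqfreeExp_apply]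
  split_ifs <;> simp

theorem coeff_sqfreeExp_univ_mvCharpoly : coeff (sqfreeExp univ) (mvCharpoly N) = 1 := by
  rw [← compl_empty, coeff_mvCharpoly, principalMinor_empty]

variable {N} {P Q : MvPolynomial ι A}

theorem isUnit_of_vars_eq_empty_of_mvCharpoly_eq_mul
    (hPQ : mvCharpoly N = P * Q) (hP : P.vars = ∅) : IsUnit P := by
  rw [vars_eq_empty_iff_eq_C] at hP
  have hunit := coeff_sqfreeExp_univ_mvCharpoly N
  rw [hPQ, hP, coeff_C_mul] at hunit
  rw [hP]
  exact (IsUnit.of_mul_eq_one _ hunit).map C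

variable [IsDomain A]

theorem disjoint_vars_of_mvCharpoly_eq_mul
    (hPQ : mvCharpoly N = P * Q) : Disjoint P.vars Q.vars := by
  have hD : mvCharpoly N ≠ 0 := fun h0 => by
    simpa [h0] using coeff_sqfreeExp_univ_mvCharpoly N
  rw [hPQ] at hD
  refine Finset.disjoint_left.2 fun i hP hQ => ?_
  have hdeg := degreeOf_mvCharpoly_le N i
  rw [hPQ, degreeOf_mul_eq (left_ne_zero_of_mul hD) (right_ne_zero_of_mul hD)] at hdeg
  rw [mem_vars_iff_degreeOf_ne_zero] at hP hQ
  omega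

theorem principalMinor_inter_mul_principalMinor_sdiff_of_eq_mul
    (hPQ : mvCharpoly N = P * Q) (R : Finset ι) :
    principalMinor N (R ∩ P.vars) * principalMinor N (R \ P.vars) = principalMinor N R := by
  set S := P.vars
  have hsplit (t : Finset ι) : principalMinor N t =
      coeff (sqfreeExp (tᶜ ∩ S)) P * coeff (sqfreeExp (tᶜ \ S)) Q := by
    rw [← coeff_mvCharpoly, sqfreeExp_eq_inter_add_sdiff _ S, hPQ]
    refine coeff_add_mul_of_vars_subset subset_rfl
      (Finset.disjoint_coe.2 (disjoint_vars_of_mvCharpoly_eq_mul hPQ).symm) ?_ ?_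
    · rw [support_sqfreeExp]
      exact Finset.coe_subset.2 inter_subset_right
    · rw [support_sqfreeExp]
      exact Finset.disjoint_coe.2 sdiff_disjoint
  have e₁ : (R ∩ S)ᶜ ∩ S = Rᶜ ∩ S := by ext; simp only [mem_inter, mem_compl]; tauto
  have e₂ : (R ∩ S)ᶜ \ S = (∅ : Finset ι)ᶜ \ S := by
    ext; simp only [mem_inter, mem_compl, mem_sdiff, notMem_empty]; tauto
  have e₃ : (R \ S)ᶜ ∩ S = (∅ : Finset ι)ᶜ ∩ S := by
    ext; simp only [mem_inter, mem_compl, mem_sdiff, notMem_empty]; tauto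
  have e₄ : (R \ S)ᶜ \ S = Rᶜ \ S := by ext; simp only [mem_compl, mem_sdiff]; tauto
  calc principalMinor N (R ∩ S) * principalMinor N (R \ S)
      = coeff (sqfreeExp (Rᶜ ∩ S)) P * coeff (sqfreeExp (Rᶜ \ S)) Q *
          (coeff (sqfreeExp ((∅ : Finset ι)ᶜ ∩ S)) P *
            coeff (sqfreeExp ((∅ : Finset ι)ᶜ \ S)) Q) := by
        rw [hsplit, hsplit, e₁, e₂, e₃, e₄]
        ring
    _ = principalMinor N R := by rw [← hsplit, ← hsplit, principalMinor_empty, mul_one]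

theorem irreducible_mvCharpoly [Nonempty ι]
    (hN : ∀ S : Finset ι, S.Nonempty → Sᶜ.Nonempty →
      ∃ R, principalMinor N (R ∩ S) * principalMinor N (R \ S) ≠ principalMinor N R) :
    Irreducible (mvCharpoly N) := by
  refine ⟨fun hu => ?_, fun P Q hPQ => ?_⟩
  · obtain ⟨r, -, hr⟩ := isUnit_iff_eq_C_of_isReduced.1 hu
    have h1 := coeff_sqfreeExp_univ_mvCharpoly N
    have h0 : sqfreeExp (univ : Finset ι) ≠ 0 := fun h => by
      simpa [sqfreeExp_apply] using DFunLike.congr_fun h (Classical.arbitrary ι)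
    rw [hr, coeff_C, if_neg h0.symm] at h1
    exact zero_ne_one h1
  by_contra! hnu
  have hS : P.vars.Nonempty := nonempty_iff_ne_empty.2 fun h =>
    hnu.1 (isUnit_of_vars_eq_empty_of_mvCharpoly_eq_mul hPQ h)
  have hT : Q.vars.Nonempty := nonempty_iff_ne_empty.2 fun h =>
    hnu.2 (isUnit_of_vars_eq_empty_of_mvCharpoly_eq_mul (hPQ.trans (mul_comm P Q)) h)
  obtain ⟨R, hR⟩ := hN P.vars hS (hT.mono fun i hi => mem_compl.2
    (disjoint_right.1 (disjoint_vars_of_mvCharpoly_eq_mul hPQ) hi))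
  exact hR (principalMinor_inter_mul_principalMinor_sdiff_of_eq_mul hPQ R)

end MvCharpoly

theorem lapM_map {V R S : Type*} [Fintype V] [CommRing R] [CommRing S] (f : R →+* S)
    (E : V → V → Prop) (x : V × V → R) : (lapM E x).map f = lapM E (f ∘ x) := by
  ext v w
  simp only [lapM, Matrix.map_apply, Matrix.of_apply, Function.comp_apply]
  split_ifs <;> simp

section FunctionalGraph

variable {V K κ : Type*} [Fintype V] [CommRing K] [Fintype κ] [DecidableEq κ] {E : V → V → Prop}
  {nxt : V → V}

noncomputable def funGraphWeight (nxt : V → V) : V × V → K :=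
  fun e => if e.2 = nxt e.1 then 1 else 0

theorem lapM_funGraphWeight_apply {v : V} (hE : E v (nxt v)) (hne : nxt v ≠ v) (w : V) :
    lapM E (funGraphWeight (K := K) nxt) v w =
      (if w = nxt v then 1 else 0) - (if w = v then 1 else 0) := by
  simp only [lapM, funGraphWeight, Matrix.of_apply]
  by_cases hvw : v = w
  · subst hvw
    rw [Finset.sum_ite_eq' _ _ _]
    simp [hE, hne.symm]
  · rw [if_neg hvw, if_neg (Ne.symm hvw), sub_zero]
    by_cases hw : w = nxt v
    · simp [hw, hE]
    · simp [hw]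

variable {f : κ → V}

theorem mulVec_submatrix_lapM_funGraphWeight (hf : Function.Injective f)
    (hE : ∀ i, E (f i) (nxt (f i))) (hne : ∀ i, nxt (f i) ≠ f i) (x : κ → K) (i : κ) :
    ((lapM E (funGraphWeight nxt)).submatrix f f).mulVec x i =
      (∑ j, if f j = nxt (f i) then x j else 0) - x i := by
  simp only [Matrix.mulVec, dotProduct, Matrix.submatrix_apply,
    lapM_funGraphWeight_apply (hE i) (hne i), sub_mul, Finset.sum_sub_distrib, ite_mul, one_mul,
    zero_mul, hf.eq_iff, Finset.sum_ite_eq', Finset.mem_univ, if_true]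

theorem det_submatrix_lapM_funGraphWeight_eq_zero [IsDomain K] [Nonempty κ]
    (hf : Function.Injective f) (hE : ∀ i, E (f i) (nxt (f i))) (hne : ∀ i, nxt (f i) ≠ f i)
    (hclosed : ∀ i, ∃ j, f j = nxt (f i)) :
    ((lapM E (funGraphWeight (K := K) nxt)).submatrix f f).det = 0 := by
  refine Matrix.exists_mulVec_eq_zero_iff.1 ⟨1, one_ne_zero, funext fun i => ?_⟩
  obtain ⟨j₀, hj₀⟩ := hclosed i
  simp [mulVec_submatrix_lapM_funGraphWeight hf hE hne, ← hj₀, hf.eq_iff]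

theorem det_submatrix_lapM_funGraphWeight_ne_zero [IsDomain K]
    (hf : Function.Injective f) (hE : ∀ i, E (f i) (nxt (f i))) (hne : ∀ i, nxt (f i) ≠ f i)
    (hescape : ∀ i, ∃ n, ∀ j, f j ≠ nxt^[n] (f i)) :
    ((lapM E (funGraphWeight (K := K) nxt)).submatrix f f).det ≠ 0 := by
  intro h0
  obtain ⟨x, hx0, hx⟩ := Matrix.exists_mulVec_eq_zero_iff.2 h0
  have hstep (i : κ) : (∃ j, f j = nxt (f i) ∧ x i = x j) ∨ (∀ j, f j ≠ nxt (f i)) ∧ x i = 0 := by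
    have hrow := congrFun hx i
    rw [mulVec_submatrix_lapM_funGraphWeight hf hE hne, Pi.zero_apply, sub_eq_zero] at hrow
    by_cases hj : ∃ j, f j = nxt (f i)
    · obtain ⟨j, hj⟩ := hj
      refine Or.inl ⟨j, hj, ?_⟩
      simpa [← hj, hf.eq_iff] using hrow.symm
    · push Not at hj
      exact Or.inr ⟨hj, by simpa [hj] using hrow.symm⟩
  -- a kernel vector is constant along `nxt` as long as the orbit stays in the block, and `0` when
  -- it leaves it
  have hzero (n : ℕ) : ∀ i, (∀ j, f j ≠ nxt^[n] (f i)) → x i = 0 := by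
    induction n with
    | zero => exact fun i hi => absurd rfl (hi i)
    | succ n ih =>
      intro i hi
      rcases hstep i with ⟨j, hj, hij⟩ | ⟨-, hi0⟩
      · rw [hij]
        exact ih j fun k => by simpa [hj] using hi k
      · exact hi0
  exact hx0 (funext fun i => (hescape i).elim fun n hn => hzero n i hn)

end FunctionalGraph

theorem Function.exists_iterate_eq_of_eqOn {R : Finset α} {y : α} {nxt nxt' : α → α}
    (hR : ∀ v ∈ R, v ≠ y → nxt v ∈ R ∧ nxt' v = nxt v) (n : ℕ) :
    ∀ v ∈ R, nxt^[n] v = y → ∃ m, nxt'^[m] v = y := by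
  induction n with
  | zero => exact fun v _ hv => ⟨0, hv⟩
  | succ n ih =>
    intro v hv hn
    by_cases hvy : v = y
    · exact ⟨0, hvy⟩
    obtain ⟨hnxtR, hnxt'⟩ := hR v hv hvy
    obtain ⟨m, hm⟩ := ih (nxt v) hnxtR hn
    exact ⟨m + 1, by rwa [Function.iterate_succ_apply, hnxt']⟩

namespace Relation.ReflTransGen

variable {α : Type*} {r : α → α → Prop}

theorem exists_rel_leaving {p : α → Prop} {u w : α} (h : ReflTransGen r u w) (hu : p u)
    (hw : ¬p w) : ∃ a b, r a b ∧ p a ∧ ¬p b := by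
  induction h using head_induction_on with
  | refl => exact absurd hu hw
  | @head a b hab _ ih => exact (_root_.em (p b)).elim ih fun hb => ⟨a, b, hab, hu, hb⟩

theorem exists_finset_iterate_eq [DecidableEq α] {x y : α} (h : ReflTransGen r x y) :
    ∃ (R : Finset α) (nxt : α → α), x ∈ R ∧ y ∈ R ∧
      (∀ v ∈ R, v ≠ y → r v (nxt v) ∧ nxt v ∈ R) ∧ ∀ v ∈ R, ∃ n, nxt^[n] v = y := by
  induction h using head_induction_on with
  | refl => exact ⟨{y}, id, mem_singleton_self y, mem_singleton_self y,
      fun v hv hvy => absurd (mem_singleton.1 hv) hvy, fun v hv => ⟨0, mem_singleton.1 hv⟩⟩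
  | @head x z hxz _ ih =>
    obtain ⟨R, nxt, hz, hy, hstep, hreach⟩ := ih
    by_cases hx : x ∈ R
    · exact ⟨R, nxt, hx, hy, hstep, hreach⟩
    have hne : ∀ v ∈ R, v ≠ x := fun v hv hvx => hx (hvx ▸ hv)
    refine ⟨insert x R, Function.update nxt x z, mem_insert_self x R, mem_insert_of_mem hy,
      fun v hv hvy => ?_, fun v hv => ?_⟩
    · rcases mem_insert.1 hv with rfl | hv
      · rw [Function.update_self]
        exact ⟨hxz, mem_insert_of_mem hz⟩
      · rw [Function.update_of_ne (hne v hv)]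
        exact (hstep v hv hvy).imp_right (mem_insert_of_mem)
    have hR : ∀ v ∈ R, v ≠ y → nxt v ∈ R ∧ Function.update nxt x z v = nxt v :=
      fun v hv hvy => ⟨(hstep v hv hvy).2, Function.update_of_ne (hne v hv) _ _⟩
    rcases mem_insert.1 hv with rfl | hv
    · obtain ⟨n, hn⟩ := hreach z hz
      obtain ⟨m, hm⟩ := Function.exists_iterate_eq_of_eqOn hR n z hz hn
      exact ⟨m + 1, by rwa [Function.iterate_succ_apply, Function.update_self]⟩
    · obtain ⟨n, hn⟩ := hreach v hv
      exact Function.exists_iterate_eq_of_eqOn hR n v hv hn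

theorem exists_cycle [DecidableEq α] {a b : α} (hab : r a b) (hba : ReflTransGen r b a) :
    ∃ (R : Finset α) (nxt : α → α), a ∈ R ∧ nxt a = b ∧
      (∀ v ∈ R, r v (nxt v) ∧ nxt v ∈ R) ∧ ∀ v ∈ R, ∃ n, nxt^[n] v = a := by
  obtain ⟨R, nxt, hb, ha, hstep, hreach⟩ := hba.exists_finset_iterate_eq
  have hR : ∀ v ∈ R, v ≠ a → nxt v ∈ R ∧ Function.update nxt a b v = nxt v :=
    fun v hv hva => ⟨(hstep v hv hva).2, Function.update_of_ne hva _ _⟩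
  refine ⟨R, Function.update nxt a b, ha, Function.update_self .., fun v hv => ?_, fun v hv => ?_⟩
  · by_cases hva : v = a
    · subst hva
      rw [Function.update_self]
      exact ⟨hab, hb⟩
    · rw [Function.update_of_ne hva]
      exact hstep v hv hva
  · obtain ⟨n, hn⟩ := hreach v hv
    exact Function.exists_iterate_eq_of_eqOn hR n v hv hn

end Relation.ReflTransGen

theorem SConn.exists_cycle_leaving {V : Type*} {E : V → V → Prop} {W : Finset V}
    (hW : SConn E ↑W) {p : V → Prop} {u w : V} (hu : u ∈ W) (hw : w ∈ W) (hpu : p u)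
    (hpw : ¬p w) :
    ∃ (R : Finset V) (nxt : V → V) (a : V), a ∈ R ∧ p a ∧ ¬p (nxt a) ∧
      (∀ v ∈ R, E v (nxt v) ∧ nxt v ∈ W ∧ nxt v ∈ R) ∧ ∀ v ∈ R, ∃ n, nxt^[n] v = a := by
  classical
  obtain ⟨a, b, hab, hpa, hpb⟩ := (hW u hu w hw).exists_rel_leaving hpu hpw
  obtain ⟨R, nxt, haR, hnxt, hstep, hreach⟩ :=
    Relation.ReflTransGen.exists_cycle (r := fun x y => E x y ∧ x ∈ (W : Set V) ∧ y ∈ (W : Set V))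
      hab (hW b hab.2.2 a hab.2.1)
  exact ⟨R, nxt, a, haR, hpa, hnxt ▸ hpb,
    fun v hv => ⟨(hstep v hv).1.1, (hstep v hv).1.2.2, (hstep v hv).2⟩, hreach⟩

section Laplacian

open MvPolynomial

variable {V K : Type*} [Fintype V] [CommRing K] (E : V → V → Prop) (W : Finset V)

theorem eval_principalMinor_subM_lapM_X (c : V × V → K) (T : Finset {v // v ∈ W}) :
    eval c (principalMinor (subM (lapM E X) W) T) =
      ((lapM E c).submatrix (fun i : T => i.1.1) (fun i : T => i.1.1)).det := by
  rw [principalMinor, RingHom.map_det, RingHom.mapMatrix_apply, subM, Matrix.submatrix_submatrix,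
    ← Matrix.submatrix_map, lapM_map]
  congr
  ext e
  exact eval_X _

variable [IsDomain K] {E W}

theorem exists_principalMinor_subM_lapM_X_ne (hsimple : ∀ v, ¬E v v) (hWsc : SConn E ↑W)
    {S : Finset {v // v ∈ W}} (hS : S.Nonempty) (hSc : Sᶜ.Nonempty) :
    ∃ R, principalMinor (subM (lapM E (X (R := K))) W) (R ∩ S) *
      principalMinor (subM (lapM E X) W) (R \ S) ≠ principalMinor (subM (lapM E X) W) R := by
  obtain ⟨u, hu⟩ := hS
  obtain ⟨q, hq⟩ := hSc
  obtain ⟨R, nxt, a, haR, ⟨haW, haS⟩, hbS, hstep, hreach⟩ := hWsc.exists_cycle_leaving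
    (p := fun v => ∃ h : v ∈ W, ⟨v, h⟩ ∈ S) u.2 q.2 ⟨u.2, hu⟩ fun ⟨_, hqS⟩ => mem_compl.1 hq hqS
  set Rι := R.subtype (· ∈ W)
  have hR {T : Finset {v // v ∈ W}} (hT : T ⊆ Rι) (i : T) : i.1.1 ∈ R := mem_subtype.1 (hT i.2)
  have hf (T : Finset {v // v ∈ W}) : Function.Injective fun i : T => i.1.1 :=
    Subtype.val_injective.comp Subtype.val_injective
  have hE {T : Finset {v // v ∈ W}} (hT : T ⊆ Rι) (i : T) : E i.1.1 (nxt i.1.1) :=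
    (hstep _ (hR hT i)).1
  have hne {T : Finset {v // v ∈ W}} (hT : T ⊆ Rι) (i : T) : nxt i.1.1 ≠ i.1.1 :=
    fun h => hsimple _ (h ▸ hE hT i)
  refine ⟨Rι, fun h => ?_⟩
  have : Nonempty Rι := ⟨⟨⟨a, haW⟩, mem_subtype.2 haR⟩⟩
  have hzero := det_submatrix_lapM_funGraphWeight_eq_zero (K := K) (hf Rι) (hE subset_rfl)
    (hne subset_rfl) fun i => ⟨⟨⟨_, (hstep _ (hR subset_rfl i)).2.1⟩,
      mem_subtype.2 (hstep _ (hR subset_rfl i)).2.2⟩, rfl⟩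
  have hinter := det_submatrix_lapM_funGraphWeight_ne_zero (K := K) (hf (Rι ∩ S))
    (hE inter_subset_left) (hne inter_subset_left) fun i => by
      obtain ⟨n, hn⟩ := hreach _ (hR inter_subset_left i)
      refine ⟨n + 1, fun j hj => ?_⟩
      rw [Function.iterate_succ_apply', hn] at hj
      exact hbS (hj ▸ ⟨j.1.2, (mem_inter.1 j.2).2⟩)
  have hsdiff := det_submatrix_lapM_funGraphWeight_ne_zero (K := K) (hf (Rι \ S))
    (hE sdiff_subset) (hne sdiff_subset) fun i => by
      obtain ⟨n, hn⟩ := hreach _ (hR sdiff_subset i)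
      refine ⟨n, fun j hj => (mem_sdiff.1 j.2).2 ?_⟩
      rw [hn] at hj
      subst hj
      exact haS
  have heval := congrArg (eval (funGraphWeight nxt)) h
  rw [map_mul, eval_principalMinor_subM_lapM_X, eval_principalMinor_subM_lapM_X,
    eval_principalMinor_subM_lapM_X] at heval
  exact mul_ne_zero hinter hsdiff (heval.trans hzero)

end Laplacian

section SplitVars

open MvPolynomial

noncomputable def splitVars (V : Type*) : Rng V ≃ₐ[ℂ] MvPolynomial V (MvPolynomial (V × V) ℂ) :=
  (renameEquiv ℂ (Equiv.sumComm (V × V) V)).trans (sumAlgEquiv ℂ V (V × V))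

variable {V : Type*}

@[simp] theorem splitVars_xv (e : V × V) : splitVars V (xv e) = C (X e) := by
  simp [splitVars, xv, sumAlgEquiv_X_inr]

@[simp] theorem splitVars_yv (v : V) : splitVars V (yv v) = X v := by
  simp [splitVars, yv, sumAlgEquiv_X_inl]

theorem splitVars_det_subM_schrM [Fintype V] (E : V → V → Prop) (W : Finset V) :
    splitVars V (subM (schrM E xv yv) W).det =
      rename Subtype.val (mvCharpoly (subM (lapM E X) W)) := by
  rw [mvCharpoly, AlgEquiv.map_det, AlgHom.map_det]
  congr 1
  have hlap : (lapM E xv).map (splitVars V).toRingEquiv.toRingHom = (lapM E X).map C := by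
    rw [lapM_map, lapM_map]
    congr 1
    funext e
    exact splitVars_xv e
  refine Matrix.ext fun i j => ?_
  simp only [AlgEquiv.mapMatrix_apply, AlgHom.mapMatrix_apply, Matrix.map_apply, subM, schrM,
    Matrix.submatrix_apply, Matrix.add_apply, map_add, Matrix.diagonal_apply]
  congr 1
  · simpa using congrFun₂ hlap i.1 j.1
  · by_cases hij : i = j
    · simp [hij]
    · simp [hij, Subtype.val_injective.ne hij]

end SplitVars

theorem statement10_general {V : Type} [Fintype V] (E : V → V → Prop)
    (hsimple : ∀ v, ¬ E v v)
    (W : Finset V) (hne : W.Nonempty) (hWsc : SConn E ↑W) :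
    Irreducible (Matrix.det (subM (schrM E (xv (V := V)) (yv (V := V))) W)) := by
  have : Nonempty W := hne.to_subtype
  rw [← MulEquiv.irreducible_iff (splitVars V), splitVars_det_subM_schrM]
  exact MvPolynomial.irreducible_rename Subtype.val_injective
    (irreducible_mvCharpoly fun S hS hSc =>
      exists_principalMinor_subM_lapM_X_ne hsimple hWsc hS hSc)

/-- For every proper strongly connected subset `W ⊊ V` of a finite
simple strongly connected digraph, the polynomial `det (L_W)` is irreducible in the
polynomial ring `ℂ[x_e, y_v]`. -/
theorem statement10 {V : Type} [Fintype V] (E : V → V → Prop)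
    (hsimple : ∀ v, ¬ E v v) (hsc : SConn E Set.univ)
    (W : Finset V) (hne : W.Nonempty) (hproper : W ≠ univ) (hWsc : SConn E ↑W) :
    Irreducible (Matrix.det (subM (schrM E (xv (V := V)) (yv (V := V))) W)) :=
  statement10_general E hsimple W hne hWsc
end
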